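/- arXiv:2107.06714 — 3 statements merged into one kernel-verified Lean document; each statement's English description precedes it below -/
import Mathlib

section
/- Suppose the evaluation function is the maximum of affine pieces: g(x,z) = max_{i ∈ [n_f]} ( f_i(x) + F_i(x)z ), i.e., g(x,z) = min{ y ∈ ℝ : y·1 ≥ f(x) + F(x)z }, corresponding to B = 1 (the all-ones column vector), d = 1 and K = ℝ^{n_f}₊, so that the dual uncertainty set is the simplex P = {ρ ∈ ℝ^{n_f}₊ : 1ᵀρ = 1}. Under the polyhedral support and polyhedral penalty assumptions, the affine dual recourse set Ȳ equals Y; that is, the safe approximation by affine dual recourse adaptation is exact: (x, υ, k) ∈ X × ℝ × ℝ₊ satisfies max_{z∈Z} ( g(x,z) − k·p(z) ) ≤ υ if and only if there exist affine functions β : ℝ^{n_f} → ℝ^{n_h}, μ : ℝ^{n_f} → ℝ^{n_μ}, η : ℝ^{n_f} → ℝ with, for all ρ ∈ P: ρᵀf(x) + β(ρ)ᵀh + η(ρ) ≤ υ; M(F(x)ᵀρ − Hᵀβ(ρ)) + Nμ(ρ) + s·η(ρ) ≤ t·k; β(ρ) ≥ 0; η(ρ) ≥ 0. -/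
/-!
Both directions are linear-programming duality, row by row of the maximum.

If affine recourse exists, evaluate it at the vertex `eᵢ` of the simplex. With
`λ = Fᵢ(x) - Hᵀβ`, the dual constraint says that `(λ, η) / k'` lies in `V` for every `k' > k`
(the slack `(k' - k) t` is absorbed by the point of `V` over the origin), so `λ z - η ≤ k p(z)`;
together with `(Hᵀβ) z ≤ βᵀh` on `Z` this bounds `fᵢ(x) + Fᵢ(x) z - k p(z)` by `υ`.

Conversely, fix a row `i`. If no dual certificate `(β, μ, η)` existed, Farkas' lemma would give
multipliers `π ≥ 0`, `σ ≥ 0` and the direction `d = Mᵀπ` with `Hd ≤ σh`, `λ d - σ η ≤ tᵀπ`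
on `V`, and `Fᵢ(x) d > σ (υ - fᵢ(x)) + k tᵀπ`. Testing the hypothesis at the points
`(τ z₀ + d) / (τ + σ)` of `Z` and letting `τ → 0` contradicts this. All constraints are jointly
linear in `(ρ, β, μ, η)`, so interpolating the vertex certificates linearly over the simplex
gives (even linear) recourse. Farkas' lemma itself follows from the separation theorem, since
finitely generated cones are closed by Carathéodory's argument.
-/

open Matrix

section ConicCombination

variable {ι E : Type*} [Fintype ι]

theorem exists_nonneg_apply_eq_zero_linearCombination_eq [AddCommGroup E] [Module ℝ E]
    {v : ι → E} (hv : ¬LinearIndependent ℝ v) {u : ι → ℝ} (hu : 0 ≤ u) :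
    ∃ u' : ι → ℝ, 0 ≤ u' ∧ (∃ i, u' i = 0) ∧
      Fintype.linearCombination ℝ v u' = Fintype.linearCombination ℝ v u := by
  classical
  obtain ⟨c, hc, j₀, hj₀⟩ :
      ∃ c : ι → ℝ, Fintype.linearCombination ℝ v c = 0 ∧ ∃ j, 0 < c j := by
    obtain ⟨g, hg, i, hi⟩ := Fintype.not_linearIndependent_iff.mp hv
    rw [← Fintype.linearCombination_apply] at hg
    rcases hi.lt_or_gt with hneg | hpos
    · exact ⟨-g, by simp [hg], i, by simpa using hneg⟩
    · exact ⟨g, hg, i, hpos⟩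
  -- Move from `u` along `-c` until the first coordinate with `c i > 0` hits zero.
  obtain ⟨i, hi, hmin⟩ := {j | 0 < c j}.toFinset.exists_min_image (fun j => u j / c j)
    ⟨j₀, by simpa using hj₀⟩
  replace hi : 0 < c i := by simpa using hi
  refine ⟨u - (u i / c i) • c, fun j => ?_, ⟨i, by simp [hi.ne']⟩, by simp [hc]⟩
  rcases lt_or_ge 0 (c j) with hj | hj
  · simpa [← le_div_iff₀ hj] using hmin j (by simpa using hj)
  · simpa using (mul_nonpos_of_nonneg_of_nonpos (div_nonneg (hu i) hi.le) hj).trans (hu j)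

variable [TopologicalSpace E] [AddCommGroup E] [IsTopologicalAddGroup E] [Module ℝ E]
  [ContinuousSMul ℝ E] [T2Space E]

theorem isClosed_image_linearCombination_nonneg_fin :
    ∀ (m : ℕ) (v : Fin m → E), IsClosed (Fintype.linearCombination ℝ v '' {u | 0 ≤ u}) := by
  intro m
  induction m using Nat.strong_induction_on with | _ m ih => ?_
  intro v
  by_cases hv : LinearIndependent ℝ v
  · exact (LinearMap.isClosedEmbedding_of_injective (LinearMap.ker_eq_bot.mpr
      (linearIndependent_iff_injective_fintypeLinearCombination.mp hv))).isClosedMap _ isClosed_Ici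
  obtain _ | m := m
  · exact absurd linearIndependent_empty_type hv
  have hunion : Fintype.linearCombination ℝ v '' {u | 0 ≤ u} =
      ⋃ i : Fin (m + 1), Fintype.linearCombination ℝ (v ∘ i.succAbove) '' {u | 0 ≤ u} := by
    ext x
    simp only [Set.mem_image, Set.mem_iUnion, Fintype.linearCombination_apply]
    constructor
    · rintro ⟨u, hu, rfl⟩
      obtain ⟨u', hu', ⟨i, hi⟩, heq⟩ := exists_nonneg_apply_eq_zero_linearCombination_eq hv hu
      simp only [Fintype.linearCombination_apply] at heq
      exact ⟨i, u' ∘ i.succAbove, fun j => hu' _, by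
        rw [← heq, Fin.sum_univ_succAbove _ i, hi, zero_smul, zero_add]; rfl⟩
    · rintro ⟨i, u, hu, rfl⟩
      exact ⟨i.insertNth 0 u, Fin.le_insertNth_iff.mpr ⟨le_rfl, hu⟩, by
        simp [Fin.sum_univ_succAbove _ i]⟩
  rw [hunion]
  exact isClosed_iUnion_of_finite fun i => ih m m.lt_succ_self _

theorem isClosed_image_linearCombination_nonneg (v : ι → E) :
    IsClosed (Fintype.linearCombination ℝ v '' {u | 0 ≤ u}) := by
  let e := Fintype.equivFin ι
  have hreindex : Fintype.linearCombination ℝ v '' {u | 0 ≤ u} =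
      Fintype.linearCombination ℝ (v ∘ e.symm) '' {u | 0 ≤ u} := by
    ext x
    simp only [Set.mem_image, Fintype.linearCombination_apply]
    constructor
    · rintro ⟨u, hu, rfl⟩
      exact ⟨u ∘ e.symm, fun j => hu _, e.symm.sum_comp (fun i => u i • v i)⟩
    · rintro ⟨u, hu, rfl⟩
      exact ⟨u ∘ e, fun j => hu _, by simpa using (e.symm.sum_comp (fun i => u (e i) • v i)).symm⟩
  rw [hreindex]
  exact isClosed_image_linearCombination_nonneg_fin _ _

theorem exists_strongDual_nonneg_of_notMem_image_linearCombination [LocallyConvexSpace ℝ E]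
    (v : ι → E) {x : E} (hx : x ∉ Fintype.linearCombination ℝ v '' {u | 0 ≤ u}) :
    ∃ f : StrongDual ℝ E, (∀ i, 0 ≤ f (v i)) ∧ f x < 0 := by
  classical
  let C : ProperCone ℝ E :=
    ⟨(PointedCone.positive ℝ (ι → ℝ)).map (Fintype.linearCombination ℝ v),
      isClosed_image_linearCombination_nonneg v⟩
  obtain ⟨f, hf, hfx⟩ := C.hyperplane_separation_point hx
  refine ⟨f, fun i => hf _ ⟨Pi.single i 1, ?_, ?_⟩, hfx⟩
  · simp [Pi.single_nonneg]
  · simp [Fintype.linearCombination_apply_single]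

end ConicCombination

theorem StrongDual.apply_eq_dotProduct {κ : Type*} [Fintype κ] [DecidableEq κ]
    (f : StrongDual ℝ (κ → ℝ)) (x : κ → ℝ) : f x = (fun i => f (Pi.single i 1)) ⬝ᵥ x := by
  conv_lhs => rw [← Finset.univ_sum_single x]
  rw [map_sum, dotProduct]
  congr 1 with i
  rw [mul_comm, ← smul_eq_mul, ← map_smul, ← Pi.single_smul', smul_eq_mul, mul_one]

theorem exists_le_of_forall_nonneg_dotProduct {E κ : Type*} [AddCommGroup E] [Module ℝ E]
    [FiniteDimensional ℝ E] [Fintype κ] (A : E →ₗ[ℝ] κ → ℝ) (b : κ → ℝ)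
    (h : ∀ w : κ → ℝ, 0 ≤ w → (∀ y, w ⬝ᵥ A y = 0) → 0 ≤ w ⬝ᵥ b) :
    ∃ y, A y ≤ b := by
  classical
  by_contra hb
  let e := Module.finBasis ℝ E
  -- `A y ≤ b` is solvable iff `b` lies in the cone spanned by `± A eⱼ` and the unit vectors.
  let v := Sum.elim (Sum.elim (A ∘ e) (-(A ∘ e))) (fun i : κ => Pi.single i (1 : ℝ))
  have hcomb : ∀ u, Fintype.linearCombination ℝ v u =
      A (∑ j, (u (.inl (.inl j)) - u (.inl (.inr j))) • e j) + u ∘ .inr := by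
    intro u
    conv_rhs => rw [← Finset.univ_sum_single (u ∘ .inr)]
    simp [Fintype.linearCombination_apply, Fintype.sum_sum_type, v, map_sum, ← Pi.single_smul',
      sub_eq_add_neg, add_smul, Finset.sum_add_distrib]
  obtain ⟨f, hf, hfb⟩ := exists_strongDual_nonneg_of_notMem_image_linearCombination v (x := b) (by
    rintro ⟨u, hu, hub⟩
    refine hb ⟨∑ j, (u (.inl (.inl j)) - u (.inl (.inr j))) • e j, ?_⟩
    rw [← hub, hcomb]
    exact le_add_of_nonneg_right fun i => hu _)
  have hfA : f.toLinearMap ∘ₗ A = 0 :=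
    e.ext fun j => le_antisymm (by simpa [v] using hf (.inl (.inr j))) (hf (.inl (.inl j)))
  have hwb := h _ (fun i => by simpa [v] using hf (.inr i)) fun y => by
    rw [← StrongDual.apply_eq_dotProduct]
    exact LinearMap.congr_fun hfA y
  rw [← StrongDual.apply_eq_dotProduct] at hwb
  exact hwb.not_gt hfb

theorem le_mul_of_forall_gt_le_mul {a b k : ℝ} (h : ∀ k' > k, a ≤ k' * b) : a ≤ k * b :=
  ge_of_tendsto ((continuous_mul_const b).continuousWithinAt.tendsto (s := Set.Ioi k))
    (eventually_nhdsWithin_of_forall h)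

theorem sum_smul_le_of_forall_le {ι W : Type*} [Fintype ι] [AddCommGroup W] [PartialOrder W]
    [IsOrderedAddMonoid W] [Module ℝ W] [PosSMulMono ℝ W] {ρ : ι → ℝ} (hρ : 0 ≤ ρ)
    (hρ1 : ∑ i, ρ i = 1) {v : ι → W} {g : W} (hv : ∀ i, v i ≤ g) : ∑ i, ρ i • v i ≤ g :=
  calc ∑ i, ρ i • v i ≤ ∑ i, ρ i • g :=
        Finset.sum_le_sum fun i _ => smul_le_smul_of_nonneg_left (hv i) (hρ i)
    _ = g := by rw [← Finset.sum_smul, hρ1, one_smul]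

section PolyhedralPenalty

variable {m n l o : Type*} [Fintype n] [Fintype o]

def penaltySet (M : Matrix l n ℝ) (N : Matrix l o ℝ) (s t : l → ℝ) : Set ((n → ℝ) × ℝ) :=
  {le | 0 ≤ le.2 ∧ ∃ μ, M *ᵥ le.1 + N *ᵥ μ + le.2 • s ≤ t}

variable {H : Matrix m n ℝ} {h : m → ℝ} {M : Matrix l n ℝ} {N : Matrix l o ℝ} {s t : l → ℝ}

theorem dotProduct_sub_le_mul_of_mulVec_add_le {z : n → ℝ} {P : ℝ}
    (hP : ∀ le ∈ penaltySet M N s t, le.1 ⬝ᵥ z - le.2 ≤ P) {μ₀ : o → ℝ} (hμ₀ : N *ᵥ μ₀ ≤ t)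
    {k : ℝ} (hk : 0 ≤ k) {lam : n → ℝ} {μ : o → ℝ} {η : ℝ} (hη : 0 ≤ η)
    (h : M *ᵥ lam + N *ᵥ μ + η • s ≤ k • t) : lam ⬝ᵥ z - η ≤ k * P := by
  refine le_mul_of_forall_gt_le_mul fun k' hk' => ?_
  have hk'0 : 0 < k' := hk.trans_lt hk'
  -- `(lam, η) / k'` lies in `V`, using `μ₀` to fill the gap `(k' - k) • t`.
  have hmem : (k'⁻¹ • lam, k'⁻¹ * η) ∈ penaltySet M N s t := by
    refine ⟨by positivity, k'⁻¹ • (μ + (k' - k) • μ₀), ?_⟩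
    calc M *ᵥ (k'⁻¹ • lam) + N *ᵥ (k'⁻¹ • (μ + (k' - k) • μ₀)) + (k'⁻¹ * η) • s
        = k'⁻¹ • ((M *ᵥ lam + N *ᵥ μ + η • s) + (k' - k) • N *ᵥ μ₀) := by
          simp only [mulVec_smul, mulVec_add, smul_add, mul_smul]; abel
      _ ≤ k'⁻¹ • (k • t + (k' - k) • t) := by gcongr
      _ = t := by rw [← add_smul, add_sub_cancel, smul_smul, inv_mul_cancel₀ hk'0.ne', one_smul]
  have hbound := hP _ hmem
  rw [smul_dotProduct, smul_eq_mul] at hbound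
  have := mul_le_mul_of_nonneg_left hbound hk'0.le
  rwa [mul_sub, ← mul_assoc, ← mul_assoc, mul_inv_cancel₀ hk'0.ne', one_mul, one_mul] at this

theorem dotProduct_sub_mul_le_of_certificate [Fintype m] {z : n → ℝ} {P : ℝ}
    (hP : ∀ le ∈ penaltySet M N s t, le.1 ⬝ᵥ z - le.2 ≤ P) {μ₀ : o → ℝ} (hμ₀ : N *ᵥ μ₀ ≤ t)
    {k : ℝ} (hk : 0 ≤ k) (hz : H *ᵥ z ≤ h) {c : n → ℝ} {β : m → ℝ} {μ : o → ℝ} {η : ℝ}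
    (hβ : 0 ≤ β) (hη : 0 ≤ η) (hcert : M *ᵥ (c - Hᵀ *ᵥ β) + N *ᵥ μ + η • s ≤ k • t) :
    c ⬝ᵥ z - k * P ≤ β ⬝ᵥ h + η := by
  have hpen := dotProduct_sub_le_mul_of_mulVec_add_le hP hμ₀ hk hη hcert
  have hsupp : (Hᵀ *ᵥ β) ⬝ᵥ z ≤ β ⬝ᵥ h := by
    rw [mulVec_transpose, ← dotProduct_mulVec]
    exact dotProduct_le_dotProduct_of_nonneg_left hz hβ
  rw [sub_dotProduct] at hpen
  linarith

theorem dotProduct_transpose_mulVec_sub_le [Fintype l] {π : l → ℝ} {σ : ℝ} (hπ : 0 ≤ π)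
    (hN : ∀ μ, π ⬝ᵥ N *ᵥ μ = 0) (hs : 0 ≤ π ⬝ᵥ s + σ) :
    ∀ le ∈ penaltySet M N s t, le.1 ⬝ᵥ (Mᵀ *ᵥ π) - σ * le.2 ≤ π ⬝ᵥ t := by
  rintro ⟨lam, η⟩ ⟨hη, μ, hle⟩
  have := dotProduct_le_dotProduct_of_nonneg_left hle hπ
  rw [dotProduct_add, dotProduct_add, hN, dotProduct_smul, smul_eq_mul] at this
  rw [mulVec_transpose, dotProduct_comm, ← dotProduct_mulVec]
  nlinarith [mul_nonneg hη hs]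

theorem dotProduct_le_of_mulVec_le_smul {V : Set ((n → ℝ) × ℝ)} {p : (n → ℝ) → ℝ}
    (hp : ∀ z, IsLUB ((fun le => le.1 ⬝ᵥ z - le.2) '' V) (p z)) {k u : ℝ} (hk : 0 ≤ k)
    {c : n → ℝ} (hcu : ∀ z, H *ᵥ z ≤ h → c ⬝ᵥ z - k * p z ≤ u) {z₀ : n → ℝ}
    (hz₀ : H *ᵥ z₀ ≤ h) {d : n → ℝ} {σ T : ℝ} (hσ : 0 ≤ σ) (hd : H *ᵥ d ≤ σ • h)
    (hT : ∀ le ∈ V, le.1 ⬝ᵥ d - σ * le.2 ≤ T) :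
    c ⬝ᵥ d ≤ σ * u + k * T := by
  suffices ∀ τ > 0, c ⬝ᵥ d - σ * u - k * T ≤ τ * (u - c ⬝ᵥ z₀ + k * p z₀) by
    linarith [le_mul_of_forall_gt_le_mul this]
  intro τ hτ
  have hρ : 0 < τ + σ := by positivity
  -- Test the hypothesis at `z = (τ z₀ + d) / (τ + σ)`, which lies in `Z`.
  set z := (τ + σ)⁻¹ • (τ • z₀ + d)
  have hz : H *ᵥ z ≤ h := by
    calc H *ᵥ z = (τ + σ)⁻¹ • (τ • H *ᵥ z₀ + H *ᵥ d) := by simp [z, mulVec_smul, mulVec_add]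
      _ ≤ (τ + σ)⁻¹ • (τ • h + σ • h) := by gcongr
      _ = h := by rw [← add_smul, smul_smul, inv_mul_cancel₀ hρ.ne', one_smul]
  have hpz : (τ + σ) * p z ≤ τ * p z₀ + T := by
    rw [← le_div_iff₀' hρ]
    refine (hp z).2 ?_
    rintro _ ⟨le, hle, rfl⟩
    have h₀ : le.1 ⬝ᵥ z₀ - le.2 ≤ p z₀ := (hp z₀).1 ⟨le, hle, rfl⟩
    rw [le_div_iff₀' hρ]
    simp only [z, dotProduct_smul, dotProduct_add, smul_eq_mul]
    field_simp
    nlinarith [hT le hle]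
  have hcz : (τ + σ) * (c ⬝ᵥ z) = τ * (c ⬝ᵥ z₀) + c ⬝ᵥ d := by
    simp only [z, dotProduct_smul, dotProduct_add, smul_eq_mul]
    field_simp
  nlinarith [hcu z hz, mul_le_mul_of_nonneg_left hpz hk]

/-- The rows `-β ≤ 0`, `Nμ + ηs - MHᵀβ ≤ kt - Mc`, `-η ≤ 0`, `βᵀh + η ≤ u` of the system
whose solutions are the dual certificates. -/
def certificateMap [Fintype m] (H : Matrix m n ℝ) (h : m → ℝ) (M : Matrix l n ℝ)
    (N : Matrix l o ℝ) (s : l → ℝ) : (m → ℝ) × (o → ℝ) × ℝ →ₗ[ℝ] (m ⊕ l) ⊕ Fin 2 → ℝ where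
  toFun y := Sum.elim (Sum.elim (-y.1) (N *ᵥ y.2.1 + y.2.2 • s - M *ᵥ Hᵀ *ᵥ y.1))
    ![-y.2.2, y.1 ⬝ᵥ h + y.2.2]
  map_add' y y' := by
    ext ((r | j) | i)
    · simp [add_comm]
    · simp only [Sum.elim_inl, Sum.elim_inr, Pi.add_apply, Pi.sub_apply, Pi.smul_apply,
        Prod.fst_add, Prod.snd_add, mulVec_add, smul_eq_mul]
      ring
    · fin_cases i <;> simp [add_dotProduct, add_add_add_comm, add_comm]
  map_smul' a y := by
    ext ((r | j) | i)
    · simp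
    · simp only [Sum.elim_inl, Sum.elim_inr, Pi.add_apply, Pi.sub_apply, Pi.smul_apply,
        Prod.smul_fst, Prod.smul_snd, mulVec_smul, smul_eq_mul, RingHom.id_apply]
      ring
    · fin_cases i <;> simp [smul_dotProduct, mul_add]

theorem nonneg_dotProduct_of_forall_dotProduct_certificateMap_eq_zero [Fintype m] [Fintype l]
    {p : (n → ℝ) → ℝ} (hp : ∀ z, IsLUB ((fun le => le.1 ⬝ᵥ z - le.2) '' penaltySet M N s t) (p z))
    {k u : ℝ} (hk : 0 ≤ k) {c : n → ℝ} {z₀ : n → ℝ} (hz₀ : H *ᵥ z₀ ≤ h)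
    (hcu : ∀ z, H *ᵥ z ≤ h → c ⬝ᵥ z - k * p z ≤ u) {w : (m ⊕ l) ⊕ Fin 2 → ℝ} (hw : 0 ≤ w)
    (hwA : ∀ y, w ⬝ᵥ certificateMap H h M N s y = 0) :
    0 ≤ w ⬝ᵥ Sum.elim (Sum.elim 0 (k • t - M *ᵥ c)) ![0, u] := by
  classical
  obtain ⟨a, π, e, σ, rfl⟩ : ∃ a π e σ, w = Sum.elim (Sum.elim a π) ![e, σ] :=
    ⟨_, _, _, _, by ext ((r | j) | i) <;> [rfl; rfl; fin_cases i <;> rfl]⟩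
  simp only [Sum.nonneg_elim_iff] at hw
  obtain ⟨⟨ha, hπ⟩, hwe⟩ := hw
  have he : 0 ≤ e := hwe 0
  have hσ : 0 ≤ σ := hwe 1
  simp only [certificateMap, LinearMap.coe_mk, AddHom.coe_mk, sumElim_dotProduct_sumElim,
    cons_dotProduct_cons, dotProduct_of_isEmpty, add_zero] at hwA ⊢
  have hMH : ∀ β, π ⬝ᵥ M *ᵥ Hᵀ *ᵥ β = (H *ᵥ Mᵀ *ᵥ π) ⬝ᵥ β := fun β => by
    rw [dotProduct_mulVec, dotProduct_mulVec, vecMul_transpose, mulVec_transpose]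
  have hN : ∀ μ, π ⬝ᵥ N *ᵥ μ = 0 := fun μ => by simpa using hwA (0, μ, 0)
  have hs : 0 ≤ π ⬝ᵥ s + σ := by
    have := hwA (0, 0, 1)
    simp only [mulVec_zero, one_smul, zero_add, sub_zero, zero_dotProduct, dotProduct_zero,
      neg_zero, mul_neg, mul_one] at this
    linarith
  have hd : H *ᵥ Mᵀ *ᵥ π ≤ σ • h := fun r => by
    have := hwA (Pi.single r 1, 0, 0)
    simp only [mulVec_zero, zero_smul, add_zero, zero_sub, dotProduct_neg, hMH,
      dotProduct_single_one, single_one_dotProduct] at this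
    have har : 0 ≤ a r := ha r
    rw [Pi.smul_apply, smul_eq_mul]
    linarith
  have := dotProduct_le_of_mulVec_le_smul hp hk hcu hz₀ hσ hd
    (dotProduct_transpose_mulVec_sub_le hπ hN hs)
  rw [dotProduct_comm, mulVec_transpose, ← dotProduct_mulVec] at this
  simp only [dotProduct_zero, dotProduct_sub, dotProduct_smul, smul_eq_mul]
  linarith

theorem exists_certificate_of_forall_le [Fintype m] [Fintype l] {p : (n → ℝ) → ℝ}
    (hp : ∀ z, IsLUB ((fun le => le.1 ⬝ᵥ z - le.2) '' penaltySet M N s t) (p z))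
    {k u : ℝ} (hk : 0 ≤ k) {c : n → ℝ} (hZ : ∃ z, H *ᵥ z ≤ h)
    (hcu : ∀ z, H *ᵥ z ≤ h → c ⬝ᵥ z - k * p z ≤ u) :
    ∃ (β : m → ℝ) (μ : o → ℝ) (η : ℝ), 0 ≤ β ∧ 0 ≤ η ∧ β ⬝ᵥ h + η ≤ u ∧
      M *ᵥ (c - Hᵀ *ᵥ β) + N *ᵥ μ + η • s ≤ k • t := by
  obtain ⟨z₀, hz₀⟩ := hZ
  obtain ⟨⟨β, μ, η⟩, hy⟩ := exists_le_of_forall_nonneg_dotProduct (certificateMap H h M N s) _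
    fun _ hw hwA =>
      nonneg_dotProduct_of_forall_dotProduct_certificateMap_eq_zero hp hk hz₀ hcu hw hwA
  simp only [certificateMap, LinearMap.coe_mk, AddHom.coe_mk, Sum.elim_le_elim_iff] at hy
  obtain ⟨⟨hβ, hM⟩, hη⟩ := hy
  refine ⟨β, μ, η, neg_nonpos.mp hβ, by simpa using hη 0, by simpa using hη 1, fun j => ?_⟩
  have := hM j
  simp only [Pi.add_apply, Pi.sub_apply, Pi.smul_apply, smul_eq_mul, mulVec_sub] at this ⊢
  linarith

theorem exists_linear_recourse [Fintype m] {ι : Type*} [Fintype ι] {f : ι → ℝ}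
    {F : Matrix ι n ℝ} {k υ : ℝ}
    (hcert : ∀ i, ∃ (β : m → ℝ) (μ : o → ℝ) (η : ℝ), 0 ≤ β ∧ 0 ≤ η ∧
      f i + β ⬝ᵥ h + η ≤ υ ∧ M *ᵥ (F i - Hᵀ *ᵥ β) + N *ᵥ μ + η • s ≤ k • t) :
    ∃ (β : (ι → ℝ) →ₗ[ℝ] m → ℝ) (μ : (ι → ℝ) →ₗ[ℝ] o → ℝ) (η : (ι → ℝ) →ₗ[ℝ] ℝ),
      ∀ ρ : ι → ℝ, 0 ≤ ρ → ∑ i, ρ i = 1 →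
        ρ ⬝ᵥ f + β ρ ⬝ᵥ h + η ρ ≤ υ ∧
        M *ᵥ (Fᵀ *ᵥ ρ - Hᵀ *ᵥ β ρ) + N *ᵥ μ ρ + η ρ • s ≤ k • t ∧ 0 ≤ β ρ ∧ 0 ≤ η ρ := by
  choose B U E hB hE h₁ h₂ using hcert
  refine ⟨Fintype.linearCombination ℝ B, Fintype.linearCombination ℝ U,
    Fintype.linearCombination ℝ E, fun ρ hρ hρ1 => ⟨?_, ?_, ?_, ?_⟩⟩
  · refine le_of_eq_of_le ?_ (sum_smul_le_of_forall_le hρ hρ1 h₁)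
    simp only [Fintype.linearCombination_apply, sum_dotProduct, smul_dotProduct, smul_eq_mul,
      mul_add, Finset.sum_add_distrib]
    rfl
  · refine le_of_eq_of_le ?_ (sum_smul_le_of_forall_le hρ hρ1 h₂)
    simp only [Fintype.linearCombination_apply, mulVec_sum, mulVec_smul, mulVec_sub,
      mulVec_transpose, vecMul_eq_sum, Finset.sum_smul, smul_add, smul_sub,
      Finset.sum_add_distrib, Finset.sum_sub_distrib, smul_smul, smul_eq_mul]
  · exact Finset.sum_nonneg fun i _ => smul_nonneg (hρ i) (hB i)
  · exact Finset.sum_nonneg fun i _ => smul_nonneg (hρ i) (hE i)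

end PolyhedralPenalty

theorem affine_dual_recourse_exact_simplex_general {nx nz nf nh nm nμ : ℕ}
    (f : (Fin nx → ℝ) →ᵃ[ℝ] (Fin nf → ℝ))
    (F : (Fin nx → ℝ) →ᵃ[ℝ] Matrix (Fin nf) (Fin nz) ℝ)
    -- polyhedral support:
    (H : Matrix (Fin nh) (Fin nz) ℝ) (h : Fin nh → ℝ)
    (hZne : ∃ z : Fin nz → ℝ, H.mulVec z ≤ h)
    -- polyhedral penalty:
    (M : Matrix (Fin nm) (Fin nz) ℝ) (N : Matrix (Fin nm) (Fin nμ) ℝ)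
    (s t : Fin nm → ℝ)
    (V : Set ((Fin nz → ℝ) × ℝ))
    (hV : V = {le | 0 ≤ le.2 ∧
      ∃ μ : Fin nμ → ℝ, M.mulVec le.1 + N.mulVec μ + le.2 • s ≤ t})
    (hVbdd : Bornology.IsBounded V)
    (hV0 : ((0 : Fin nz → ℝ), (0 : ℝ)) ∈ V)
    (p : (Fin nz → ℝ) → ℝ)
    (hp : ∀ ζ, p ζ = sSup {v : ℝ | ∃ le ∈ V, v = le.1 ⬝ᵥ ζ - le.2})
    (x : Fin nx → ℝ) (υ k : ℝ) (hk : 0 ≤ k) :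
    -- `max_i (fᵢ(x) + Fᵢ(x)z) − k·p(z) ≤ υ` for all `z ∈ Z` …
    (∀ z : Fin nz → ℝ, H.mulVec z ≤ h →
        ∀ i : Fin nf, (f x + (F x).mulVec z) i - k * p z ≤ υ)
    ↔ -- … iff the affine dual recourse constraints hold on the simplex `P`.
    (∃ (β : (Fin nf → ℝ) →ᵃ[ℝ] (Fin nh → ℝ)) (μ : (Fin nf → ℝ) →ᵃ[ℝ] (Fin nμ → ℝ))
        (η : (Fin nf → ℝ) →ᵃ[ℝ] ℝ),
      ∀ ρ : Fin nf → ℝ, 0 ≤ ρ → ∑ i, ρ i = 1 →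
        ρ ⬝ᵥ f x + β ρ ⬝ᵥ h + η ρ ≤ υ ∧
        M.mulVec ((F x)ᵀ.mulVec ρ - Hᵀ.mulVec (β ρ)) + N.mulVec (μ ρ)
            + η ρ • s ≤ k • t ∧
        0 ≤ β ρ ∧ 0 ≤ η ρ) := by
  have hlub : ∀ z, IsLUB ((fun le => le.1 ⬝ᵥ z - le.2) '' V) (p z) := fun z => by
    have hset : {v : ℝ | ∃ le ∈ V, v = le.1 ⬝ᵥ z - le.2} = (fun le => le.1 ⬝ᵥ z - le.2) '' V := by
      ext; simp [eq_comm]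
    rw [hp, hset]
    exact isLUB_csSup ⟨_, Set.mem_image_of_mem _ hV0⟩
      ((hVbdd.isCompact_closure.image (by fun_prop)).bddAbove.mono (Set.image_mono subset_closure))
  subst hV
  obtain ⟨-, μ₀, hμ₀⟩ := hV0
  constructor
  · intro hyp
    obtain ⟨β, μ, η, hrec⟩ := exists_linear_recourse (f := f x) (F := F x) fun i => by
      obtain ⟨β, μ, η, hβ, hη, hu, hM⟩ := exists_certificate_of_forall_le hlub hk hZne
        (c := F x i) (u := υ - f x i) fun z hz => by
          have : f x i + F x i ⬝ᵥ z - k * p z ≤ υ := hyp z hz i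
          linarith
      exact ⟨β, μ, η, hβ, hη, by linarith, hM⟩
    exact ⟨β.toAffineMap, μ.toAffineMap, η.toAffineMap, hrec⟩
  · rintro ⟨β, μ, η, hrec⟩ z hz i
    obtain ⟨h₁, h₂, hβ, hη⟩ := hrec (Pi.single i 1) (Pi.single_nonneg.mpr zero_le_one) (by simp)
    rw [single_one_dotProduct] at h₁
    rw [mulVec_single_one] at h₂
    have := dotProduct_sub_mul_le_of_certificate (fun le hle => (hlub z).1 ⟨le, hle, rfl⟩)
      (by simpa using hμ₀) hk hz (c := F x i) hβ hη h₂
    change f x i + F x i ⬝ᵥ z - k * p z ≤ υ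
    linarith

/-- **Theorem 4 (exactness of affine dual recourse adaptation for max-of-affine
evaluation functions).**
If `g(x,z) = max_i (fᵢ(x) + Fᵢ(x)z)`, so that the dual uncertainty set is the simplex
`P = {ρ ≥ 0 : 1ᵀρ = 1}`, then under the polyhedral support and penalty assumptions the
affine dual recourse adaptation is exact: `(x,υ,k)` with `x ∈ X`, `k ≥ 0` satisfies
`g(x,z) − k·p(z) ≤ υ` for all `z ∈ Z` iff there exist affine `β, μ, η` satisfying the dual
constraints for all `ρ ∈ P`. -/
theorem affine_dual_recourse_exact_simplex {nx nz nf nh nm nμ : ℕ}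
    (f : (Fin nx → ℝ) →ᵃ[ℝ] (Fin nf → ℝ))
    (F : (Fin nx → ℝ) →ᵃ[ℝ] Matrix (Fin nf) (Fin nz) ℝ)
    -- polyhedral support:
    (H : Matrix (Fin nh) (Fin nz) ℝ) (h : Fin nh → ℝ) (hh : 0 ≤ h)
    (hZne : ∃ z : Fin nz → ℝ, H.mulVec z ≤ h)
    -- polyhedral penalty:
    (M : Matrix (Fin nm) (Fin nz) ℝ) (N : Matrix (Fin nm) (Fin nμ) ℝ)
    (s t : Fin nm → ℝ)
    (V : Set ((Fin nz → ℝ) × ℝ))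
    (hV : V = {le | 0 ≤ le.2 ∧
      ∃ μ : Fin nμ → ℝ, M.mulVec le.1 + N.mulVec μ + le.2 • s ≤ t})
    (hVbdd : Bornology.IsBounded V)
    (hV0 : ((0 : Fin nz → ℝ), (0 : ℝ)) ∈ V)
    (hslater : ∃ μhat : Fin nμ → ℝ, ∀ i, (N.mulVec μhat) i < t i)
    (p : (Fin nz → ℝ) → ℝ)
    (hp : ∀ ζ, p ζ = sSup {v : ℝ | ∃ le ∈ V, v = le.1 ⬝ᵥ ζ - le.2})
    (X : Set (Fin nx → ℝ))
    (x : Fin nx → ℝ) (hx : x ∈ X) (υ k : ℝ) (hk : 0 ≤ k) :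
    -- `max_i (fᵢ(x) + Fᵢ(x)z) − k·p(z) ≤ υ` for all `z ∈ Z` …
    (∀ z : Fin nz → ℝ, H.mulVec z ≤ h →
        ∀ i : Fin nf, (f x + (F x).mulVec z) i - k * p z ≤ υ)
    ↔ -- … iff the affine dual recourse constraints hold on the simplex `P`.
    (∃ (β : (Fin nf → ℝ) →ᵃ[ℝ] (Fin nh → ℝ)) (μ : (Fin nf → ℝ) →ᵃ[ℝ] (Fin nμ → ℝ))
        (η : (Fin nf → ℝ) →ᵃ[ℝ] ℝ),
      ∀ ρ : Fin nf → ℝ, 0 ≤ ρ → ∑ i, ρ i = 1 →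
        ρ ⬝ᵥ f x + β ρ ⬝ᵥ h + η ρ ≤ υ ∧
        M.mulVec ((F x)ᵀ.mulVec ρ - Hᵀ.mulVec (β ρ)) + N.mulVec (μ ρ)
            + η ρ • s ≤ k • t ∧
        0 ≤ β ρ ∧ 0 ≤ η ρ) :=
  affine_dual_recourse_exact_simplex_general f F H h hZne M N s t V hV hVbdd hV0 p hp x υ k hk
end

section
/- Consider the two-stage linear evaluation function g(x,z) = cᵀx + min{dᵀy : y ∈ ℝ^{n_y}, By ≥ f(x) + F(x)z} with ℓ₁-norm penalty p(z) = ‖z‖₁ and polyhedral support Z = {z : Hz ≤ h}, h ≥ 0, under complete and bounded recourse for the linear system (for every v there exists y with By ≥ v, and no y satisfies By ≥ 0 with dᵀy < 0). Let Ȳ_P = {(x,υ,k) ∈ X × ℝ × ℝ₊ : ∃ q ∈ ℝ^{n_y}, Q ∈ ℝ^{n_y×n_z}, q† ∈ ℝ^{n_y} such that cᵀx + dᵀ(q + Qz + q†‖z‖₁) − k‖z‖₁ ≤ υ for all z ∈ Z; B(q + Qz + q†‖z‖₁) ≥ f(x) + F(x)z for all z ∈ Z; k − dᵀq† ≥ 0;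 Bq† ≥ 0}. Then: (i) Ȳ_P ⊆ Y, where Y = {(x,υ,k) ∈ X × ℝ × ℝ₊ : ∃ y : ℝ^{n_z} → ℝ^{n_y} with cᵀx + dᵀy(z) − k‖z‖₁ ≤ υ and By(z) ≥ f(x) + F(x)z for all z ∈ Z}; (ii) for every x ∈ X and every υ > g(x,0) there exists k ≥ 0 with (x,υ,k) ∈ Ȳ_P; and (iii) Ȳ_P admits the explicit representation Ȳ_P = {(x,υ,k) ∈ X × ℝ × ℝ₊ : ∃ q, Q, q† and w⁰, w¹, …, w^{n_f} ∈ ℝ^{n_h}₊ such that cᵀx + dᵀq + hᵀw⁰ ≤ υ; −(k − dᵀq†)·1 ≤ Hᵀw⁰ − Qᵀd ≤ (k − dᵀq†)·1; f_i(x) + hᵀwⁱ ≤ B_i q for all i ∈ [n_f]; and −(B_i q†)·1 ≤ Hᵀwⁱ − F_i(x)ᵀ + QᵀB_iᵀ ≤ (B_i q†)·1 for all i ∈ [n_f]}. -/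
/-!
Everything reduces to linear programming duality for one robust constraint with `ℓ₁` penalty:
on the polyhedron `H z ≤ h`, the inequality `a ⬝ᵥ z - s * ‖z‖₁ ≤ b` holds iff some `w ≥ 0` has
`h ⬝ᵥ w ≤ b` and `‖Hᵀ w - a‖_∞ ≤ s`. Substituting the decision rule turns the cost and each row
of the recourse constraint into such a constraint, which gives (iii). Part (i) is immediate, and
for (ii) the rule `y(z) = y₀ + ‖z‖₁ q†` works, with `y₀` nearly optimal at `z = 0` and
`(B q†)ᵢ ≥ ‖Fᵢ(x)‖₁`, which complete recourse provides. The duality comes from Farkas' lemma for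
the cone `{A y | y ≥ 0}`, which is closed by Carathéodory's argument.
-/

open Matrix

section ConicHull

variable {ι : Type*}

def supportedOrthant (s : Finset ι) : Set (ι → ℝ) := {y | 0 ≤ y ∧ ∀ i ∉ s, y i = 0}

lemma supportedOrthant_mono {s t : Finset ι} (hst : s ⊆ t) :
    supportedOrthant s ⊆ supportedOrthant t :=
  fun _ ⟨hy, hys⟩ ↦ ⟨hy, fun i hi ↦ hys i fun his ↦ hi (hst his)⟩

lemma isClosed_supportedOrthant (s : Finset ι) : IsClosed (supportedOrthant s) := by
  simp only [supportedOrthant, Set.ofPred_and, Set.ofPred_forall]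
  exact (isClosed_le continuous_const continuous_id).inter <|
    isClosed_iInter fun i ↦ isClosed_iInter fun _ ↦
      isClosed_eq (continuous_apply i) continuous_const

variable [Fintype ι] {E : Type*} [NormedAddCommGroup E] [NormedSpace ℝ E]
  (L : (ι → ℝ) →ₗ[ℝ] E)

/-- Carathéodory's step: moving along a kernel direction `g` with a positive entry until the
first coordinate vanishes. -/
lemma image_supportedOrthant_subset_biUnion [DecidableEq ι] {s : Finset ι} {g : ι → ℝ}
    (hgs : ∀ i ∉ s, g i = 0) (hLg : L g = 0) {i₀ : ι} (hi₀ : 0 < g i₀) :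
    L '' supportedOrthant s ⊆ ⋃ j ∈ s, L '' supportedOrthant (s.erase j) := by
  rintro _ ⟨y, ⟨hy, hys⟩, rfl⟩
  obtain ⟨j, hj, hjmin⟩ := (Finset.univ.filter (0 < g ·)).exists_min_image (fun i ↦ y i / g i)
    ⟨i₀, by simpa using hi₀⟩
  simp only [Finset.mem_filter, Finset.mem_univ, true_and] at hj hjmin
  have hjs : j ∈ s := by_contra fun h ↦ hj.ne' (hgs j h)
  set t := y j / g j
  refine Set.mem_biUnion hjs ⟨y - t • g, ⟨fun i ↦ ?_, fun i hi ↦ ?_⟩, by simp [hLg]⟩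
  · simp only [Pi.zero_apply, Pi.sub_apply, Pi.smul_apply, smul_eq_mul, sub_nonneg]
    rcases le_or_gt (g i) 0 with hgi | hgi
    · exact (mul_nonpos_of_nonneg_of_nonpos (div_nonneg (hy j) hj.le) hgi).trans (hy i)
    · exact (le_div_iff₀ hgi).mp (hjmin i hgi)
  · rcases eq_or_ne i j with rfl | hij
    · simp [t, div_mul_cancel₀ _ hj.ne']
    · have his : i ∉ s := fun h ↦ hi (Finset.mem_erase.mpr ⟨hij, h⟩)
      simp [hys i his, hgs i his]

theorem isClosed_image_supportedOrthant [DecidableEq ι] (s : Finset ι) :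
    IsClosed (L '' supportedOrthant s) := by
  induction s using Finset.strongInduction with
  | H s ih =>
  by_cases hinj : ∀ g : ι → ℝ, (∀ i ∉ s, g i = 0) → L g = 0 → g = 0
  · let V : Submodule ℝ (ι → ℝ) := Submodule.pi (↑s)ᶜ fun _ ↦ ⊥
    have hV : ∀ y, y ∈ V ↔ ∀ i ∉ s, y i = 0 := by simp [V, Submodule.mem_pi]
    have hemb : Topology.IsClosedEmbedding (L.domRestrict V) :=
      LinearMap.isClosedEmbedding_of_injective <| LinearMap.ker_eq_bot'.mpr fun y hy ↦
        Subtype.ext (hinj y ((hV y).mp y.2) hy)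
    have himage : L '' supportedOrthant s =
        L.domRestrict V '' (Subtype.val ⁻¹' supportedOrthant s) := by
      ext x
      constructor
      · rintro ⟨y, hy, rfl⟩
        exact ⟨⟨y, (hV y).mpr hy.2⟩, hy, rfl⟩
      · rintro ⟨y, hy, rfl⟩
        exact ⟨y, hy, rfl⟩
    rw [himage]
    exact hemb.isClosedMap _ ((isClosed_supportedOrthant s).preimage continuous_subtype_val)
  · push Not at hinj
    obtain ⟨g, hgs, hLg, hg⟩ := hinj
    obtain ⟨i₀, hi₀⟩ := Function.ne_iff.mp hg
    have hsub : L '' supportedOrthant s ⊆ ⋃ j ∈ s, L '' supportedOrthant (s.erase j) := by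
      rcases lt_or_gt_of_ne hi₀ with hneg | hpos
      · exact image_supportedOrthant_subset_biUnion L (g := -g) (by simpa using hgs)
          (by simpa using hLg) (i₀ := i₀) (by simpa using hneg)
      · exact image_supportedOrthant_subset_biUnion L hgs hLg hpos
    rw [hsub.antisymm (Set.iUnion₂_subset fun j _ ↦
      Set.image_mono (supportedOrthant_mono (s.erase_subset j)))]
    exact isClosed_biUnion_finset fun j hj ↦ ih _ (Finset.erase_ssubset hj)

theorem isClosed_image_nonneg : IsClosed (L '' Set.Ici 0) := by
  classical
  simpa [supportedOrthant, Set.Ici] using isClosed_image_supportedOrthant L Finset.univ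

theorem exists_nonneg_eq_or_exists_separating (x : E) :
    (∃ y, 0 ≤ y ∧ L y = x) ∨ ∃ φ : StrongDual ℝ E, (∀ y, 0 ≤ y → 0 ≤ φ (L y)) ∧ φ x < 0 := by
  let C : ProperCone ℝ E := ⟨(PointedCone.positive ℝ (ι → ℝ)).map L, isClosed_image_nonneg L⟩
  by_cases hx : x ∈ C
  · exact .inl hx
  · obtain ⟨φ, hφ, hφx⟩ := C.hyperplane_separation_point hx
    exact .inr ⟨φ, fun y hy ↦ hφ _ ⟨y, hy, rfl⟩, hφx⟩

end ConicHull

lemma LinearMap.apply_eq_dotProduct {k : Type*} [Fintype k] [DecidableEq k]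
    (φ : (k → ℝ) →ₗ[ℝ] ℝ) (v : k → ℝ) : φ v = (fun i ↦ φ (Pi.single i 1)) ⬝ᵥ v := by
  rw [φ.pi_apply_eq_sum_univ v, dotProduct]
  refine Finset.sum_congr rfl fun i _ ↦ ?_
  rw [smul_eq_mul, mul_comm]
  congr 2
  ext j
  simp [Pi.single_apply, eq_comm]

theorem Matrix.exists_nonneg_mulVec_eq_or {k ι : Type*} [Fintype k] [Fintype ι]
    (M : Matrix k ι ℝ) (x : k → ℝ) :
    (∃ y, 0 ≤ y ∧ M *ᵥ y = x) ∨ ∃ w, 0 ≤ w ᵥ* M ∧ w ⬝ᵥ x < 0 := by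
  classical
  refine (exists_nonneg_eq_or_exists_separating M.mulVecLin x).imp id ?_
  rintro ⟨φ, hφ, hφx⟩
  have hφ_apply (v : k → ℝ) : φ v = (fun i ↦ φ (Pi.single i 1)) ⬝ᵥ v :=
    (φ : (k → ℝ) →ₗ[ℝ] ℝ).apply_eq_dotProduct v
  refine ⟨fun i ↦ φ (Pi.single i 1), fun j ↦ ?_, by rwa [← hφ_apply]⟩
  have := hφ (Pi.single j 1) (Pi.single_nonneg.mpr zero_le_one)
  rwa [mulVecLin_apply, hφ_apply, dotProduct_mulVec, dotProduct_single, mul_one] at this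

theorem Matrix.dotProduct_add_mul_nonneg_of_forall_mulVec_le {m n : Type*} [Fintype n]
    {A : Matrix m n ℝ} {b : m → ℝ} {c : n → ℝ} {β : ℝ} {x₀ : n → ℝ} (hx₀ : A *ᵥ x₀ ≤ b)
    (hbdd : ∀ x, A *ᵥ x ≤ b → c ⬝ᵥ x ≤ β) {x₁ : n → ℝ} {τ : ℝ} (hτ : 0 ≤ τ)
    (hrow : ∀ i, 0 ≤ (A *ᵥ x₁) i + τ * b i) : 0 ≤ c ⬝ᵥ x₁ + τ * β := by
  by_contra! hobj
  rcases hτ.eq_or_lt with rfl | hτpos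
  · -- `-x₁` is a recession direction along which the objective grows without bound
    have hcx₁ : c ⬝ᵥ x₁ < 0 := by simpa using hobj
    set t := (c ⬝ᵥ x₀ - β - 1) / c ⬝ᵥ x₁
    have ht : 0 ≤ t := div_nonneg_of_nonpos (by linarith [hbdd x₀ hx₀]) hcx₁.le
    have hfeas : A *ᵥ (x₀ - t • x₁) ≤ b := fun i ↦ by
      have := hrow i
      rw [zero_mul, add_zero] at this
      simp only [mulVec_sub, mulVec_smul, Pi.sub_apply, Pi.smul_apply, smul_eq_mul]
      nlinarith [hx₀ i]
    have := hbdd _ hfeas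
    rw [dotProduct_sub, dotProduct_smul, smul_eq_mul, div_mul_cancel₀ _ hcx₁.ne] at this
    linarith
  · have hfeas : A *ᵥ (-τ⁻¹ • x₁) ≤ b := fun i ↦ by
      have := mul_le_mul_of_nonneg_left (hrow i) (inv_nonneg.mpr hτ)
      rw [mul_zero, mul_add, ← mul_assoc, inv_mul_cancel₀ hτpos.ne', one_mul] at this
      simp only [mulVec_smul, Pi.smul_apply, smul_eq_mul, neg_mul]
      linarith
    have := mul_le_mul_of_nonneg_left (hbdd _ hfeas) hτ
    rw [dotProduct_smul, smul_eq_mul, neg_mul, mul_neg, ← mul_assoc,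
      mul_inv_cancel₀ hτpos.ne', one_mul] at this
    linarith

theorem Matrix.exists_nonneg_vecMul_eq_of_forall_mulVec_le {m n : Type*} [Fintype m] [Fintype n]
    (A : Matrix m n ℝ) (b : m → ℝ) (c : n → ℝ) (β : ℝ) (hfeas : ∃ x, A *ᵥ x ≤ b)
    (hbdd : ∀ x, A *ᵥ x ≤ b → c ⬝ᵥ x ≤ β) : ∃ y, 0 ≤ y ∧ y ᵥ* A = c ∧ b ⬝ᵥ y ≤ β := by
  classical
  obtain ⟨x₀, hx₀⟩ := hfeas
  let M : Matrix (n ⊕ Unit) (m ⊕ Unit) ℝ := fromBlocks Aᵀ 0 (replicateRow Unit b) 1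
  rcases M.exists_nonneg_mulVec_eq_or (Sum.elim c fun _ ↦ β) with ⟨y, hy, hMy⟩ | ⟨w, hw, hwx⟩
  · refine ⟨y ∘ Sum.inl, fun i ↦ hy _, funext fun j ↦ ?_, ?_⟩
    · simpa [M, fromBlocks_mulVec, mulVec_transpose] using congrFun hMy (Sum.inl j)
    · have := congrFun hMy (Sum.inr ())
      simp [M, fromBlocks_mulVec, replicateRow_mulVec_eq_const] at this
      have h0 : (0 : ℝ) ≤ y (Sum.inr ()) := hy _
      linarith
  · have hrow : ∀ i, 0 ≤ (A *ᵥ (w ∘ Sum.inl)) i + w (Sum.inr ()) * b i := fun i ↦ by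
      have := hw (Sum.inl i)
      simp only [M, vecMul_fromBlocks, Sum.elim_inl, Pi.add_apply, vecMul_transpose] at this
      simpa [vecMul, dotProduct] using this
    have hτ : 0 ≤ w (Sum.inr ()) := by simpa [M, vecMul_fromBlocks] using hw (Sum.inr ())
    have hobj : c ⬝ᵥ (w ∘ Sum.inl) + w (Sum.inr ()) * β < 0 := by
      simpa [dotProduct, Fintype.sum_sum_type, mul_comm] using hwx
    exact absurd (dotProduct_add_mul_nonneg_of_forall_mulVec_le hx₀ hbdd hτ hrow) hobj.not_ge

section RobustL1

variable {m n : Type*} [Fintype m] [Fintype n] {H : Matrix m n ℝ} {h : m → ℝ} {a : n → ℝ}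
  {s b : ℝ}

lemma dotProduct_le_mul_sum_abs (ha : ∀ j, |a j| ≤ s) (z : n → ℝ) :
    a ⬝ᵥ z ≤ s * ∑ j, |z j| := by
  rw [Finset.mul_sum]
  refine Finset.sum_le_sum fun j _ ↦ ?_
  calc a j * z j ≤ |a j| * |z j| := abs_mul (a j) (z j) ▸ le_abs_self _
    _ ≤ s * |z j| := mul_le_mul_of_nonneg_right (ha j) (abs_nonneg _)

theorem dotProduct_sub_mul_sum_abs_le_of_dual {w : m → ℝ} (hw : 0 ≤ w) (hwb : h ⬝ᵥ w ≤ b)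
    (hws : ∀ j, |(Hᵀ *ᵥ w - a) j| ≤ s) {z : n → ℝ} (hz : H *ᵥ z ≤ h) :
    a ⬝ᵥ z - s * ∑ j, |z j| ≤ b := by
  have hHw : (Hᵀ *ᵥ w) ⬝ᵥ z ≤ h ⬝ᵥ w := by
    rw [mulVec_transpose, ← dotProduct_mulVec, dotProduct_comm h]
    exact dotProduct_le_dotProduct_of_nonneg_left hz hw
  have hrest := dotProduct_le_mul_sum_abs (a := a - Hᵀ *ᵥ w)
    (fun j ↦ abs_sub_comm (a j) _ ▸ hws j) z
  rw [sub_dotProduct] at hrest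
  linarith

theorem exists_dual_of_dotProduct_sub_mul_sum_abs_le (hZ : ∃ z, H *ᵥ z ≤ h) (hs : 0 ≤ s)
    (hrob : ∀ z, H *ᵥ z ≤ h → a ⬝ᵥ z - s * ∑ j, |z j| ≤ b) :
    ∃ w, 0 ≤ w ∧ h ⬝ᵥ w ≤ b ∧ ∀ j, |(Hᵀ *ᵥ w - a) j| ≤ s := by
  classical
  -- the linear program `max a ⬝ᵥ z - s * ∑ t` over `H z ≤ h`, `|z| ≤ t`, in the variables `(z, t)`
  let A : Matrix (m ⊕ (n ⊕ n)) (n ⊕ n) ℝ := fromRows (fromCols H 0) (fromBlocks 1 (-1) (-1) (-1))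
  have hA : ∀ x, A *ᵥ x ≤ Sum.elim h 0 ↔
      H *ᵥ (x ∘ Sum.inl) ≤ h ∧ ∀ j, |x (Sum.inl j)| ≤ x (Sum.inr j) := fun x ↦ by
    simp [A, fromBlocks_mulVec, Pi.le_def, abs_le', forall_and, neg_mulVec, one_mulVec]
  obtain ⟨y, hy, hyA, hyb⟩ := A.exists_nonneg_vecMul_eq_of_forall_mulVec_le (Sum.elim h 0)
    (Sum.elim a fun _ ↦ -s) b
    (by
      obtain ⟨z, hz⟩ := hZ
      exact ⟨Sum.elim z fun j ↦ |z j|, (hA _).mpr ⟨hz, fun _ ↦ le_rfl⟩⟩)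
    (fun x hx ↦ by
      obtain ⟨hz, ht⟩ := (hA x).mp hx
      have hzb := hrob _ hz
      have hst : s * ∑ j, |x (Sum.inl j)| ≤ s * ∑ j, x (Sum.inr j) :=
        mul_le_mul_of_nonneg_left (Finset.sum_le_sum fun j _ ↦ ht j) hs
      simp only [dotProduct, Fintype.sum_sum_type, Sum.elim_inl, Sum.elim_inr,
        Function.comp_apply, neg_mul, Finset.sum_neg_distrib, ← Finset.mul_sum] at hzb ⊢
      linarith)
  refine ⟨y ∘ Sum.inl, fun i ↦ hy _, by simpa [dotProduct, Fintype.sum_sum_type] using hyb,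
    fun j ↦ ?_⟩
  have h1 := congrFun hyA (Sum.inl j)
  have h2 := congrFun hyA (Sum.inr j)
  simp [A, vecMul_fromBlocks, vecMul_neg] at h1 h2
  have hα : (0 : ℝ) ≤ y (Sum.inr (Sum.inl j)) := hy _
  have hβ : (0 : ℝ) ≤ y (Sum.inr (Sum.inr j)) := hy _
  rw [Pi.sub_apply, mulVec_transpose, abs_le]
  constructor <;> linarith

end RobustL1

section DecisionRule

variable {m n p l : Type*} [Fintype n] [Fintype p]

lemma dotProduct_add_mulVec_add_smul (e q q' : n → ℝ) (Q : Matrix n p ℝ) (z : p → ℝ) (t : ℝ) :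
    e ⬝ᵥ (q + Q *ᵥ z + t • q') = e ⬝ᵥ q + (Qᵀ *ᵥ e) ⬝ᵥ z + t * (e ⬝ᵥ q') := by
  rw [dotProduct_add, dotProduct_add, dotProduct_smul, dotProduct_mulVec, ← mulVec_transpose,
    smul_eq_mul]

lemma decisionRule_cost_le_iff (d q q' : n → ℝ) (Q : Matrix n p ℝ) (z : p → ℝ)
    (γ υ k t : ℝ) :
    γ + d ⬝ᵥ (q + Q *ᵥ z + t • q') - k * t ≤ υ ↔
      (Qᵀ *ᵥ d) ⬝ᵥ z - (k - d ⬝ᵥ q') * t ≤ υ - γ - d ⬝ᵥ q := by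
  rw [dotProduct_add_mulVec_add_smul]
  constructor <;> intro <;> linarith

lemma decisionRule_feasible_iff (B : Matrix m n ℝ) (u : m → ℝ) (G : Matrix m p ℝ)
    (q q' : n → ℝ) (Q : Matrix n p ℝ) (z : p → ℝ) (t : ℝ) :
    u + G *ᵥ z ≤ B *ᵥ (q + Q *ᵥ z + t • q') ↔
      ∀ i, (G i - Qᵀ *ᵥ B i) ⬝ᵥ z - (B *ᵥ q') i * t ≤ (B *ᵥ q) i - u i := by
  refine forall_congr' fun i ↦ ?_
  change u i + G i ⬝ᵥ z ≤ B i ⬝ᵥ (q + Q *ᵥ z + t • q') ↔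
    (G i - Qᵀ *ᵥ B i) ⬝ᵥ z - B i ⬝ᵥ q' * t ≤ B i ⬝ᵥ q - u i
  rw [dotProduct_add_mulVec_add_smul, sub_dotProduct]
  constructor <;> intro <;> linarith

theorem exists_decisionRule_of_lt_sInf {B : Matrix m n ℝ} (hcomplete : ∀ v, ∃ y, v ≤ B *ᵥ y)
    (d : n → ℝ) (u : m → ℝ) (G : Matrix m p ℝ) (H : Matrix l p ℝ) (h : l → ℝ) {γ υ : ℝ}
    (hυ : γ + sInf {v | ∃ y, u ≤ B *ᵥ y ∧ v = d ⬝ᵥ y} < υ) :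
    ∃ k, 0 ≤ k ∧ ∃ (qv : n → ℝ) (Q : Matrix n p ℝ) (qd : n → ℝ),
      (∀ z, H *ᵥ z ≤ h → γ + d ⬝ᵥ (qv + Q *ᵥ z + (∑ j, |z j|) • qd) - k * ∑ j, |z j| ≤ υ) ∧
      (∀ z, H *ᵥ z ≤ h → u + G *ᵥ z ≤ B *ᵥ (qv + Q *ᵥ z + (∑ j, |z j|) • qd)) ∧
      0 ≤ k - d ⬝ᵥ qd ∧ 0 ≤ B *ᵥ qd := by
  obtain ⟨y, hy⟩ := hcomplete u
  obtain ⟨_, ⟨y₀, hy₀, rfl⟩, hυ₀⟩ := exists_lt_of_csInf_lt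
    (s := {v | ∃ y, u ≤ B *ᵥ y ∧ v = d ⬝ᵥ y}) ⟨_, y, hy, rfl⟩ (lt_sub_iff_add_lt'.mpr hυ)
  obtain ⟨qd, hqd⟩ := hcomplete fun i ↦ ∑ j, |G i j|
  have hGqd : ∀ i j, |G i j| ≤ (B *ᵥ qd) i := fun i j ↦
    (Finset.single_le_sum (fun j _ ↦ abs_nonneg (G i j)) (Finset.mem_univ j)).trans (hqd i)
  refine ⟨max 0 (d ⬝ᵥ qd), le_max_left _ _, y₀, 0, qd, fun z _ ↦ ?_, fun z _ ↦ ?_,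
    sub_nonneg.mpr (le_max_right _ _),
    fun i ↦ (Finset.sum_nonneg fun j _ ↦ abs_nonneg (G i j)).trans (hqd i)⟩
  · rw [decisionRule_cost_le_iff, transpose_zero, zero_mulVec, zero_dotProduct, zero_sub]
    have : 0 ≤ (max 0 (d ⬝ᵥ qd) - d ⬝ᵥ qd) * ∑ j, |z j| :=
      mul_nonneg (sub_nonneg.mpr (le_max_right _ _)) (Finset.sum_nonneg fun j _ ↦ abs_nonneg (z j))
    linarith
  · rw [decisionRule_feasible_iff]
    intro i
    rw [transpose_zero, zero_mulVec, sub_zero]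
    linarith [dotProduct_le_mul_sum_abs (hGqd i) z, hy₀ i]

theorem exists_decisionRule_iff_exists_certificate [Fintype l] {H : Matrix l p ℝ} {h : l → ℝ}
    (hZ : ∃ z, H *ᵥ z ≤ h) (d : n → ℝ) (B : Matrix m n ℝ) (u : m → ℝ) (G : Matrix m p ℝ)
    {γ υ k : ℝ} (hk : 0 ≤ k) :
    (∃ (qv : n → ℝ) (Q : Matrix n p ℝ) (qd : n → ℝ),
      (∀ z, H *ᵥ z ≤ h → γ + d ⬝ᵥ (qv + Q *ᵥ z + (∑ j, |z j|) • qd) - k * ∑ j, |z j| ≤ υ) ∧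
      (∀ z, H *ᵥ z ≤ h → u + G *ᵥ z ≤ B *ᵥ (qv + Q *ᵥ z + (∑ j, |z j|) • qd)) ∧
      0 ≤ k - d ⬝ᵥ qd ∧ 0 ≤ B *ᵥ qd) ↔
    ∃ (qv : n → ℝ) (Q : Matrix n p ℝ) (qd : n → ℝ) (w0 : l → ℝ) (w : m → l → ℝ),
      0 ≤ w0 ∧ (∀ i, 0 ≤ w i) ∧ γ + d ⬝ᵥ qv + h ⬝ᵥ w0 ≤ υ ∧
      (∀ j, -(k - d ⬝ᵥ qd) ≤ (Hᵀ *ᵥ w0 - Qᵀ *ᵥ d) j ∧ (Hᵀ *ᵥ w0 - Qᵀ *ᵥ d) j ≤ k - d ⬝ᵥ qd) ∧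
      (∀ i, u i + h ⬝ᵥ w i ≤ (B *ᵥ qv) i) ∧
      (∀ i j, -((B *ᵥ qd) i) ≤ (Hᵀ *ᵥ w i) j - G i j + (Qᵀ *ᵥ B i) j ∧
        (Hᵀ *ᵥ w i) j - G i j + (Qᵀ *ᵥ B i) j ≤ (B *ᵥ qd) i) := by
  simp only [decisionRule_cost_le_iff, decisionRule_feasible_iff]
  constructor
  · rintro ⟨qv, Q, qd, hcost, hfeas, hs₀, hs⟩
    obtain ⟨w0, hw0, hw0b, hw0s⟩ := exists_dual_of_dotProduct_sub_mul_sum_abs_le hZ hs₀ hcost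
    choose w hw hwb hws using fun i ↦
      exists_dual_of_dotProduct_sub_mul_sum_abs_le hZ (hs i) fun z hz ↦ hfeas z hz i
    refine ⟨qv, Q, qd, w0, w, hw0, hw, by linarith, fun j ↦ abs_le.mp (hw0s j),
      fun i ↦ by linarith [hwb i], fun i j ↦ ?_⟩
    have := abs_le.mp (hws i j)
    simp only [Pi.sub_apply] at this
    constructor <;> linarith [this.1, this.2]
  · rintro ⟨qv, Q, qd, w0, w, hw0, hw, hcost, hbd0, hfeas, hbd⟩
    have hcost' := fun z (hz : H *ᵥ z ≤ h) ↦ dotProduct_sub_mul_sum_abs_le_of_dual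
      (s := k - d ⬝ᵥ qd) (b := υ - γ - d ⬝ᵥ qv) hw0 (by linarith) (fun j ↦ abs_le.mpr (hbd0 j)) hz
    have hfeas' := fun z (hz : H *ᵥ z ≤ h) i ↦ dotProduct_sub_mul_sum_abs_le_of_dual
      (a := G i - Qᵀ *ᵥ B i) (s := (B *ᵥ qd) i) (b := (B *ᵥ qv) i - u i) (hw i)
      (by linarith [hfeas i])
      (fun j ↦ abs_le.mpr (by simp only [Pi.sub_apply]; constructor <;> linarith [hbd i j])) hz
    rcases isEmpty_or_nonempty p with _ | ⟨⟨j₀⟩⟩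
    · -- for `p` empty `‖z‖₁ = 0`, so `qd` may be replaced by `0`
      refine ⟨qv, Q, 0, fun z hz ↦ ?_, fun z hz i ↦ ?_, by simpa using hk, by simp⟩
      · simpa using hcost' z hz
      · simpa using hfeas' z hz i
    · exact ⟨qv, Q, qd, hcost', hfeas', by linarith [hbd0 j₀],
        fun i ↦ show (0 : ℝ) ≤ _ by linarith [hbd i j₀]⟩

end DecisionRule

theorem primal_nonaffine_recourse_two_stage_general {nx ny nz nf nh : ℕ}
    (c : Fin nx → ℝ) (d : Fin ny → ℝ) (B : Matrix (Fin nf) (Fin ny) ℝ)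
    (f : (Fin nx → ℝ) →ᵃ[ℝ] (Fin nf → ℝ))
    (F : (Fin nx → ℝ) →ᵃ[ℝ] Matrix (Fin nf) (Fin nz) ℝ)
    -- polyhedral support:
    (H : Matrix (Fin nh) (Fin nz) ℝ) (h : Fin nh → ℝ)
    (hZne : ∃ z : Fin nz → ℝ, H.mulVec z ≤ h)
    -- complete and bounded recourse:
    (hcomplete : ∀ v : Fin nf → ℝ, ∃ y : Fin ny → ℝ, v ≤ B.mulVec y)
    -- the evaluation function:
    (g : (Fin nx → ℝ) → (Fin nz → ℝ) → ℝ)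
    (hg : ∀ x z, g x z = c ⬝ᵥ x + sInf {v : ℝ | ∃ y : Fin ny → ℝ,
        f x + (F x).mulVec z ≤ B.mulVec y ∧ v = d ⬝ᵥ y})
    (X : Set (Fin nx → ℝ))
    -- the exact feasible set `Y` and the primal approximation `Ȳ_P`:
    (Y YbarP : Set ((Fin nx → ℝ) × ℝ × ℝ))
    (hY : Y = {q : (Fin nx → ℝ) × ℝ × ℝ | q.1 ∈ X ∧ 0 ≤ q.2.2 ∧
      ∃ y : (Fin nz → ℝ) → (Fin ny → ℝ), ∀ z : Fin nz → ℝ, H.mulVec z ≤ h →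
        (c ⬝ᵥ q.1 + d ⬝ᵥ y z - q.2.2 * ∑ i, |z i| ≤ q.2.1 ∧
         f q.1 + (F q.1).mulVec z ≤ B.mulVec (y z))})
    (hYbarP : YbarP = {q : (Fin nx → ℝ) × ℝ × ℝ | q.1 ∈ X ∧ 0 ≤ q.2.2 ∧
      ∃ (qv : Fin ny → ℝ) (Q : Matrix (Fin ny) (Fin nz) ℝ) (qd : Fin ny → ℝ),
        (∀ z : Fin nz → ℝ, H.mulVec z ≤ h →
          c ⬝ᵥ q.1 + d ⬝ᵥ (qv + Q.mulVec z + (∑ i, |z i|) • qd)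
            - q.2.2 * ∑ i, |z i| ≤ q.2.1) ∧
        (∀ z : Fin nz → ℝ, H.mulVec z ≤ h →
          f q.1 + (F q.1).mulVec z ≤ B.mulVec (qv + Q.mulVec z + (∑ i, |z i|) • qd)) ∧
        0 ≤ q.2.2 - d ⬝ᵥ qd ∧ 0 ≤ B.mulVec qd}) :
    -- (i) `Ȳ_P` is a safe approximation of `Y`:
    YbarP ⊆ Y ∧
    -- (ii) feasibility above the nominal value:
    (∀ x ∈ X, ∀ υ : ℝ, g x 0 < υ → ∃ k : ℝ, 0 ≤ k ∧ (x, υ, k) ∈ YbarP) ∧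
    -- (iii) explicit representation:
    YbarP = {q : (Fin nx → ℝ) × ℝ × ℝ | q.1 ∈ X ∧ 0 ≤ q.2.2 ∧
      ∃ (qv : Fin ny → ℝ) (Q : Matrix (Fin ny) (Fin nz) ℝ) (qd : Fin ny → ℝ)
        (w0 : Fin nh → ℝ) (w : Fin nf → Fin nh → ℝ),
        0 ≤ w0 ∧ (∀ i, 0 ≤ w i) ∧
        c ⬝ᵥ q.1 + d ⬝ᵥ qv + h ⬝ᵥ w0 ≤ q.2.1 ∧
        (∀ j : Fin nz, -(q.2.2 - d ⬝ᵥ qd) ≤ (Hᵀ.mulVec w0 - Qᵀ.mulVec d) j ∧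
          (Hᵀ.mulVec w0 - Qᵀ.mulVec d) j ≤ q.2.2 - d ⬝ᵥ qd) ∧
        (∀ i : Fin nf, f q.1 i + h ⬝ᵥ w i ≤ B.mulVec qv i) ∧
        (∀ (i : Fin nf) (j : Fin nz),
          -(B.mulVec qd i) ≤ (Hᵀ.mulVec (w i)) j - F q.1 i j + (Qᵀ.mulVec (B i)) j ∧
          (Hᵀ.mulVec (w i)) j - F q.1 i j + (Qᵀ.mulVec (B i)) j ≤ B.mulVec qd i)} := by
  subst hY hYbarP
  refine ⟨?_, fun x hx υ hυ ↦ ?_, ?_⟩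
  · rintro ⟨x, υ, k⟩ ⟨hx, hk, qv, Q, qd, hcost, hfeas, -, -⟩
    exact ⟨hx, hk, fun z ↦ qv + Q *ᵥ z + (∑ j, |z j|) • qd, fun z hz ↦ ⟨hcost z hz, hfeas z hz⟩⟩
  · rw [hg, mulVec_zero, add_zero] at hυ
    obtain ⟨k, hk, hrule⟩ := exists_decisionRule_of_lt_sInf hcomplete d (f x) (F x) H h hυ
    exact ⟨k, hk, hx, hk, hrule⟩
  · ext ⟨x, υ, k⟩
    exact and_congr_right fun _ ↦ and_congr_right fun hk ↦
      exists_decisionRule_iff_exists_certificate hZne d B (f x) (F x) hk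

/-- **Proposition 8 (primal non-affine recourse adaptation for two-stage linear
optimization with ℓ₁ penalty).**
For the two-stage linear evaluation function `g(x,z) = cᵀx + min{dᵀy : By ≥ f(x)+F(x)z}`
with ℓ₁ penalty and polyhedral support, under complete and bounded recourse, the set
`Ȳ_P` obtained from the decision rule `y(z) = q + Qz + q†‖z‖₁`: (i) is contained in `Y`;
(ii) is feasible for every `x ∈ X` and `υ > g(x,0)`; and (iii) admits the explicit
linear-robust-counterpart representation. -/
theorem primal_nonaffine_recourse_two_stage {nx ny nz nf nh : ℕ}
    (c : Fin nx → ℝ) (d : Fin ny → ℝ) (B : Matrix (Fin nf) (Fin ny) ℝ)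
    (f : (Fin nx → ℝ) →ᵃ[ℝ] (Fin nf → ℝ))
    (F : (Fin nx → ℝ) →ᵃ[ℝ] Matrix (Fin nf) (Fin nz) ℝ)
    -- polyhedral support:
    (H : Matrix (Fin nh) (Fin nz) ℝ) (h : Fin nh → ℝ) (hh : 0 ≤ h)
    (hZne : ∃ z : Fin nz → ℝ, H.mulVec z ≤ h)
    -- complete and bounded recourse:
    (hcomplete : ∀ v : Fin nf → ℝ, ∃ y : Fin ny → ℝ, v ≤ B.mulVec y)
    (hbounded : ¬ ∃ y : Fin ny → ℝ, 0 ≤ B.mulVec y ∧ d ⬝ᵥ y < 0)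
    -- the evaluation function:
    (g : (Fin nx → ℝ) → (Fin nz → ℝ) → ℝ)
    (hg : ∀ x z, g x z = c ⬝ᵥ x + sInf {v : ℝ | ∃ y : Fin ny → ℝ,
        f x + (F x).mulVec z ≤ B.mulVec y ∧ v = d ⬝ᵥ y})
    (X : Set (Fin nx → ℝ))
    -- the exact feasible set `Y` and the primal approximation `Ȳ_P`:
    (Y YbarP : Set ((Fin nx → ℝ) × ℝ × ℝ))
    (hY : Y = {q : (Fin nx → ℝ) × ℝ × ℝ | q.1 ∈ X ∧ 0 ≤ q.2.2 ∧
      ∃ y : (Fin nz → ℝ) → (Fin ny → ℝ), ∀ z : Fin nz → ℝ, H.mulVec z ≤ h →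
        (c ⬝ᵥ q.1 + d ⬝ᵥ y z - q.2.2 * ∑ i, |z i| ≤ q.2.1 ∧
         f q.1 + (F q.1).mulVec z ≤ B.mulVec (y z))})
    (hYbarP : YbarP = {q : (Fin nx → ℝ) × ℝ × ℝ | q.1 ∈ X ∧ 0 ≤ q.2.2 ∧
      ∃ (qv : Fin ny → ℝ) (Q : Matrix (Fin ny) (Fin nz) ℝ) (qd : Fin ny → ℝ),
        (∀ z : Fin nz → ℝ, H.mulVec z ≤ h →
          c ⬝ᵥ q.1 + d ⬝ᵥ (qv + Q.mulVec z + (∑ i, |z i|) • qd)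
            - q.2.2 * ∑ i, |z i| ≤ q.2.1) ∧
        (∀ z : Fin nz → ℝ, H.mulVec z ≤ h →
          f q.1 + (F q.1).mulVec z ≤ B.mulVec (qv + Q.mulVec z + (∑ i, |z i|) • qd)) ∧
        0 ≤ q.2.2 - d ⬝ᵥ qd ∧ 0 ≤ B.mulVec qd}) :
    -- (i) `Ȳ_P` is a safe approximation of `Y`:
    YbarP ⊆ Y ∧
    -- (ii) feasibility above the nominal value:
    (∀ x ∈ X, ∀ υ : ℝ, g x 0 < υ → ∃ k : ℝ, 0 ≤ k ∧ (x, υ, k) ∈ YbarP) ∧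
    -- (iii) explicit representation:
    YbarP = {q : (Fin nx → ℝ) × ℝ × ℝ | q.1 ∈ X ∧ 0 ≤ q.2.2 ∧
      ∃ (qv : Fin ny → ℝ) (Q : Matrix (Fin ny) (Fin nz) ℝ) (qd : Fin ny → ℝ)
        (w0 : Fin nh → ℝ) (w : Fin nf → Fin nh → ℝ),
        0 ≤ w0 ∧ (∀ i, 0 ≤ w i) ∧
        c ⬝ᵥ q.1 + d ⬝ᵥ qv + h ⬝ᵥ w0 ≤ q.2.1 ∧
        (∀ j : Fin nz, -(q.2.2 - d ⬝ᵥ qd) ≤ (Hᵀ.mulVec w0 - Qᵀ.mulVec d) j ∧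
          (Hᵀ.mulVec w0 - Qᵀ.mulVec d) j ≤ q.2.2 - d ⬝ᵥ qd) ∧
        (∀ i : Fin nf, f q.1 i + h ⬝ᵥ w i ≤ B.mulVec qv i) ∧
        (∀ (i : Fin nf) (j : Fin nz),
          -(B.mulVec qd i) ≤ (Hᵀ.mulVec (w i)) j - F q.1 i j + (Qᵀ.mulVec (B i)) j ∧
          (Hᵀ.mulVec (w i)) j - F q.1 i j + (Qᵀ.mulVec (B i)) j ≤ B.mulVec qd i)} :=
  primal_nonaffine_recourse_two_stage_general c d B f F H h hZne hcomplete g hg X Y YbarP hY hYbarP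
end

section
/- Consider the two-stage linear evaluation function g(x,z) = cᵀx + min{dᵀy : y ∈ ℝ^{n_y}, By ≥ f(x) + F(x)z} with ℓ₁-norm penalty and polyhedral support Z = {z : Hz ≤ h}, h ≥ 0, under complete and bounded recourse for the linear system (for every v there exists y with By ≥ v, and no y satisfies By ≥ 0 with dᵀy < 0). Let Ȳ_P = {(x,υ,k) ∈ X × ℝ × ℝ₊ : ∃ q ∈ ℝ^{n_y}, Q ∈ ℝ^{n_y×n_z}, q† ∈ ℝ^{n_y} such that cᵀx + dᵀ(q + Qz + q†‖z‖₁) − k‖z‖₁ ≤ υ for all z ∈ Z; B(q + Qz + q†‖z‖₁) ≥ f(x) + F(x)z for all z ∈ Z; k − dᵀq† ≥ 0; Bq† ≥ 0}, and let Ȳ_D = {(x,υ,k) ∈ X × ℝ × ℝ₊ : ∃ π ∈ ℝ^{n_h}, Π ∈ ℝ^{n_h×n_f} such that for all ρ ∈ P: cᵀx + ρᵀf(x) + (π + Πρ)ᵀh ≤ υ; −k·1 ≤ Hᵀ(π + Πρ) − F(x)ᵀρ ≤ k·1; and π + Πρ ≥ 0}, where P = {ρ ∈ ℝ^{n_f}₊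 : Bᵀρ = d}. Then Ȳ_P ⊆ Ȳ_D; that is, the affine dual recourse adaptation is at least as tight an approximation as the non-affine primal recourse adaptation. -/
open Matrix

/-!
Each constraint of `Ȳ_P` is a robust constraint `aᵀz - t‖z‖₁ ≤ b` over the polyhedron
`Hz ≤ h`. By LP duality (Farkas' lemma applied to the epigraph of `‖·‖₁`) it has a dual witness
`μ ≥ 0` with `hᵀμ ≤ b` and `‖Hᵀμ - a‖∞ ≤ t`, and such witnesses are stable under nonnegative
combinations. Let `π` witness the objective constraint and let the columns of `Π` witness the rows
of the recourse constraint. For `ρ ∈ P`, the vector `π + Πρ` witnesses the `ρ`-weighted sum of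
these constraints, in which `Bᵀρ = d` makes the terms in `q`, `Q` and `q†` cancel; what remains
are exactly the conditions defining `Ȳ_D`.
-/

section Farkas

variable {𝕜 : Type*} [Field 𝕜]

namespace Module.Dual

variable {E ι : Type*} [AddCommGroup E] [Module 𝕜 E]

def shear (y : E) (v u : Module.Dual 𝕜 E) : Module.Dual 𝕜 E := u - (u y / v y) • v

theorem apply_sub_smul_eq_shear_apply (y y' : E) (v u : Module.Dual 𝕜 E) :
    u (y' - (v y' / v y) • y) = shear y v u y' := by
  simp only [shear, map_sub, map_smul, LinearMap.sub_apply, LinearMap.smul_apply, smul_eq_mul]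
  ring

variable [LinearOrder 𝕜] [IsStrictOrderedRing 𝕜]

theorem mem_hull_insert_of_shear_mem_hull [DecidableEq ι] {φ : ι → Module.Dual 𝕜 E}
    {ψ : Module.Dual 𝕜 E} {s : Finset ι} {i : ι} {y : E} (hiy : 0 < φ i y)
    (hy : ∀ j ∈ s, φ j y ≤ 0) (hψy : 0 ≤ ψ y)
    (hmem : shear y (φ i) ψ ∈ PointedCone.hull 𝕜 ((shear y (φ i) ∘ φ) '' s)) :
    ψ ∈ PointedCone.hull 𝕜 (φ '' ↑(insert i s)) := by
  have hφi : φ i ∈ PointedCone.hull 𝕜 (φ '' ↑(insert i s)) :=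
    PointedCone.subset_hull ⟨i, by simp, rfl⟩
  have hle : PointedCone.hull 𝕜 ((shear y (φ i) ∘ φ) '' s) ≤
      PointedCone.hull 𝕜 (φ '' ↑(insert i s)) := by
    rw [Submodule.span_le]
    rintro _ ⟨j, hj, rfl⟩
    have hshear : shear y (φ i) (φ j) = φ j + (-(φ j y / φ i y)) • φ i := by
      simp only [shear]; module
    rw [Function.comp_apply, hshear]
    exact add_mem (PointedCone.subset_hull ⟨j, by simp [hj], rfl⟩) (PointedCone.smul_mem _
      (neg_nonneg.mpr (div_nonpos_of_nonpos_of_nonneg (hy j hj) hiy.le)) hφi)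
  have hψ : ψ = shear y (φ i) ψ + (ψ y / φ i y) • φ i := by simp [shear]
  rw [hψ]
  exact add_mem (hle hmem) (PointedCone.smul_mem _ (div_nonneg hψy hiy.le) hφi)

theorem mem_hull_or_exists_separating (φ : ι → Module.Dual 𝕜 E) (ψ : Module.Dual 𝕜 E)
    (s : Finset ι) :
    ψ ∈ PointedCone.hull 𝕜 (φ '' s) ∨ ∃ y, (∀ i ∈ s, φ i y ≤ 0) ∧ 0 < ψ y := by
  classical
  induction s using Finset.induction_on generalizing φ ψ with
  | empty =>
    by_cases hψ : ψ = 0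
    · exact .inl (hψ ▸ zero_mem _)
    obtain ⟨y, hy⟩ : ∃ y, ψ y ≠ 0 := by
      by_contra! h
      exact hψ (LinearMap.ext h)
    rcases hy.lt_or_gt with hneg | hpos
    · exact .inr ⟨-y, by simp, by simpa using hneg⟩
    · exact .inr ⟨y, by simp, hpos⟩
  | insert i s _ ih =>
    rcases ih φ ψ with hmem | ⟨y, hy, hψy⟩
    · exact .inl (Submodule.span_mono (Set.image_mono (by simp)) hmem)
    by_cases hiy : φ i y ≤ 0
    · exact .inr ⟨y, Finset.forall_mem_insert _ _ _ |>.mpr ⟨hiy, hy⟩, hψy⟩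
    push Not at hiy
    -- Fourier–Motzkin elimination of `φ i`: the sheared functionals all vanish at `y`, so a
    -- separating point for them can be corrected along `y` to also satisfy `φ i ≤ 0`.
    rcases ih (shear y (φ i) ∘ φ) (shear y (φ i) ψ) with hmem | ⟨y', hy', hψy'⟩
    · exact .inl (mem_hull_insert_of_shear_mem_hull hiy hy hψy.le hmem)
    refine .inr ⟨y' - (φ i y' / φ i y) • y,
      Finset.forall_mem_insert _ _ _ |>.mpr ⟨?_, fun j hj => ?_⟩, ?_⟩ <;>
      rw [apply_sub_smul_eq_shear_apply]
    · simp [shear, hiy.ne']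
    · exact hy' j hj
    · exact hψy'

end Module.Dual

variable [LinearOrder 𝕜] [IsStrictOrderedRing 𝕜]

theorem Matrix.farkas_alternative {ι κ : Type*} [Fintype ι] [Fintype κ] (M : Matrix ι κ 𝕜)
    (a : κ → 𝕜) : (∃ μ, 0 ≤ μ ∧ μ ᵥ* M = a) ∨ ∃ y, M *ᵥ y ≤ 0 ∧ 0 < a ⬝ᵥ y := by
  classical
  let e := dotProductEquiv 𝕜 κ
  rcases Module.Dual.mem_hull_or_exists_separating (fun i => e (M i)) (e a) Finset.univ with
    hmem | ⟨y, hy, hay⟩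
  · rw [Finset.coe_univ, Set.image_univ, Submodule.mem_span_range_iff_exists_fun] at hmem
    obtain ⟨c, hc⟩ := hmem
    refine .inl ⟨fun i => c i, fun i => (c i).2, e.injective ?_⟩
    rw [← hc, vecMul_eq_sum, map_sum]
    exact Finset.sum_congr rfl fun i _ => map_smul e (c i : 𝕜) (M i)
  · exact .inr ⟨y, fun i => hy i (Finset.mem_univ _), hay⟩

variable {ι κ : Type*} [Fintype κ] {M : Matrix ι κ 𝕜} {m : ι → 𝕜} {a : κ → 𝕜} {b : 𝕜}

theorem Matrix.dotProduct_le_mul_of_mulVec_le_smul (hfeas : ∃ u, M *ᵥ u ≤ m)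
    (himp : ∀ u, M *ᵥ u ≤ m → a ⬝ᵥ u ≤ b) {u : κ → 𝕜} {s : 𝕜} (hs : 0 ≤ s)
    (hu : M *ᵥ u ≤ s • m) : a ⬝ᵥ u ≤ s * b := by
  rcases hs.lt_or_eq with hs | rfl
  · have := himp (s⁻¹ • u) <| by
      rw [mulVec_smul]
      calc s⁻¹ • M *ᵥ u ≤ s⁻¹ • s • m := smul_le_smul_of_nonneg_left hu (inv_nonneg.mpr hs.le)
        _ = m := inv_smul_smul₀ hs.ne' m
    rwa [dotProduct_smul, smul_eq_mul, inv_mul_le_iff₀ hs] at this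
  -- for `s = 0`, `u` is a recession direction of the feasible set along which `a` would grow
  obtain ⟨u₀, hu₀⟩ := hfeas
  by_contra! hau
  rw [zero_smul] at hu
  rw [zero_mul] at hau
  set τ := (|b - a ⬝ᵥ u₀| + 1) / (a ⬝ᵥ u)
  have hτ : 0 ≤ τ := by positivity
  have := himp (u₀ + τ • u) <| by
    rw [mulVec_add, mulVec_smul]
    calc M *ᵥ u₀ + τ • M *ᵥ u ≤ m + τ • 0 := add_le_add hu₀ (smul_le_smul_of_nonneg_left hu hτ)
      _ = m := by simp
  rw [dotProduct_add, dotProduct_smul, smul_eq_mul, div_mul_cancel₀ _ hau.ne'] at this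
  linarith [le_abs_self (b - a ⬝ᵥ u₀)]

theorem Matrix.farkas_affine [Fintype ι] (hfeas : ∃ u, M *ᵥ u ≤ m)
    (himp : ∀ u, M *ᵥ u ≤ m → a ⬝ᵥ u ≤ b) : ∃ μ, 0 ≤ μ ∧ μ ᵥ* M = a ∧ μ ⬝ᵥ m ≤ b := by
  -- homogenization: the extra column scales the right-hand side, the extra row keeps it `≥ 0`
  let M' : Matrix (ι ⊕ Unit) (κ ⊕ Unit) 𝕜 := fromBlocks M (replicateCol Unit (-m)) 0 (-1)
  have hvecMul (μ : ι → 𝕜) (ν : 𝕜) :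
      Sum.elim μ (fun _ => ν) ᵥ* M' = Sum.elim (μ ᵥ* M) fun _ => -(μ ⬝ᵥ m) - ν := by
    ext (j | _) <;> simp [M', vecMul, dotProduct, replicateCol, sub_eq_add_neg]
  have hmulVec (u : κ → 𝕜) (s : 𝕜) :
      M' *ᵥ Sum.elim u (fun _ => s) = Sum.elim (M *ᵥ u - s • m) fun _ => -s := by
    ext (i | _) <;> simp [M', mulVec, dotProduct, replicateCol, sub_eq_add_neg, mul_comm]
  rcases farkas_alternative M' (Sum.elim a fun _ => -b) with ⟨μν, hμν, hμνM⟩ | ⟨us, hus, haus⟩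
  · obtain ⟨μ, ν, rfl⟩ : ∃ μ ν, μν = Sum.elim μ fun _ => ν :=
      ⟨μν ∘ Sum.inl, μν (.inr ()), by ext (_ | _) <;> rfl⟩
    rw [hvecMul, Sum.elim_eq_iff] at hμνM
    have hb : -(μ ⬝ᵥ m) - ν = -b := congrFun hμνM.2 ()
    have hν : 0 ≤ ν := hμν (.inr ())
    exact ⟨μ, fun i => hμν (.inl i), hμνM.1, by linarith⟩
  · obtain ⟨u, s, rfl⟩ : ∃ u s, us = Sum.elim u fun _ => s :=
      ⟨us ∘ Sum.inl, us (.inr ()), by ext (_ | _) <;> rfl⟩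
    rw [hmulVec, ← Sum.elim_zero_zero, Sum.elim_le_elim_iff, sub_nonpos] at hus
    have := dotProduct_le_mul_of_mulVec_le_smul hfeas himp (neg_nonpos.mp (hus.2 ())) hus.1
    rw [sumElim_dotProduct_sumElim] at haus
    simp only [dotProduct, Finset.univ_unique, Finset.sum_singleton] at haus this
    linarith

end Farkas

section L1

variable {𝕜 κ ν : Type*}

section Epigraph

variable [Ring 𝕜] [DecidableEq ν]

-- Its rows `H z ≤ h`, `z - w ≤ 0`, `-z - w ≤ 0` cut out `{(z, w) | H z ≤ h, |z| ≤ w}`.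
def l1EpigraphMatrix (H : Matrix κ ν 𝕜) : Matrix (κ ⊕ (ν ⊕ ν)) (ν ⊕ ν) 𝕜 :=
  fromRows (fromCols H 0) (fromBlocks 1 (-1) (-1) (-1))

theorem sumElim_vecMul_l1EpigraphMatrix [Fintype κ] [Fintype ν] (H : Matrix κ ν 𝕜) (μ : κ → 𝕜)
    (p q : ν → 𝕜) :
    Sum.elim μ (Sum.elim p q) ᵥ* l1EpigraphMatrix H = Sum.elim (μ ᵥ* H + p - q) (-p - q) := by
  simp [l1EpigraphMatrix, vecMul_fromBlocks, vecMul_neg, ← Sum.elim_add_add, sub_eq_add_neg,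
    add_assoc]

theorem l1EpigraphMatrix_mulVec_le_iff [LinearOrder 𝕜] [IsStrictOrderedRing 𝕜] [Fintype ν]
    {H : Matrix κ ν 𝕜} {h : κ → 𝕜} {z w : ν → 𝕜} :
    l1EpigraphMatrix H *ᵥ Sum.elim z w ≤ Sum.elim h 0 ↔ H *ᵥ z ≤ h ∧ ∀ j, |z j| ≤ w j := by
  have hmulVec : l1EpigraphMatrix H *ᵥ Sum.elim z w =
      Sum.elim (H *ᵥ z) (Sum.elim (z - w) (-z - w)) := by
    simp [l1EpigraphMatrix, fromBlocks_mulVec, neg_mulVec, sub_eq_add_neg]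
  rw [hmulVec, ← Sum.elim_zero_zero, Sum.elim_le_elim_iff, Sum.elim_le_elim_iff,
    Pi.le_def (x := z - w), Pi.le_def (x := -z - w), ← forall_and]
  refine and_congr_right fun _ => forall_congr' fun j => ?_
  simp only [Pi.sub_apply, Pi.neg_apply, Pi.zero_apply, sub_nonpos, abs_le, neg_le (a := z j)]
  exact and_comm

end Epigraph

variable [Field 𝕜] [LinearOrder 𝕜] [IsStrictOrderedRing 𝕜] [Fintype κ]

-- `μ` is a dual witness of `a ⬝ᵥ z - t * ∑ j, |z j| ≤ b` on the polyhedron `H *ᵥ z ≤ h`.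
def IsL1DualCertificate (H : Matrix κ ν 𝕜) (h : κ → 𝕜) (a : ν → 𝕜) (t b : 𝕜) (μ : κ → 𝕜) :
    Prop :=
  0 ≤ μ ∧ μ ⬝ᵥ h ≤ b ∧ ∀ j, |(μ ᵥ* H - a) j| ≤ t

theorem exists_isL1DualCertificate [Fintype ν] (H : Matrix κ ν 𝕜) (h : κ → 𝕜)
    (hZ : ∃ z, H *ᵥ z ≤ h) {a : ν → 𝕜} {t b : 𝕜} (ht : 0 ≤ t)
    (hab : ∀ z, H *ᵥ z ≤ h → a ⬝ᵥ z - t * ∑ j, |z j| ≤ b) :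
    ∃ μ, IsL1DualCertificate H h a t b μ := by
  classical
  have hfeas : ∃ zw, l1EpigraphMatrix H *ᵥ zw ≤ Sum.elim h 0 := by
    obtain ⟨z, hz⟩ := hZ
    exact ⟨Sum.elim z fun j => |z j|, l1EpigraphMatrix_mulVec_le_iff.mpr ⟨hz, fun _ => le_rfl⟩⟩
  have himp : ∀ zw, l1EpigraphMatrix H *ᵥ zw ≤ Sum.elim h 0 →
      Sum.elim a (fun _ => -t) ⬝ᵥ zw ≤ b := by
    intro zw hzw
    obtain ⟨z, w, rfl⟩ : ∃ z w, zw = Sum.elim z w := ⟨_, _, (Sum.elim_comp_inl_inr zw).symm⟩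
    obtain ⟨hz, habs⟩ := l1EpigraphMatrix_mulVec_le_iff.mp hzw
    calc Sum.elim a (fun _ => -t) ⬝ᵥ Sum.elim z w = a ⬝ᵥ z - t * ∑ j, w j := by
          simp [dotProduct, Finset.mul_sum, sub_eq_add_neg]
      _ ≤ a ⬝ᵥ z - t * ∑ j, |z j| := by gcongr; exact habs _
      _ ≤ b := hab z hz
  obtain ⟨μpq, hμpq, hM, hb⟩ := farkas_affine hfeas himp
  obtain ⟨μ, p, q, rfl⟩ : ∃ μ p q, μpq = Sum.elim μ (Sum.elim p q) :=
    ⟨_, _, _, by ext (_ | _ | _) <;> rfl⟩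
  rw [sumElim_vecMul_l1EpigraphMatrix, Sum.elim_eq_iff] at hM
  rw [sumElim_dotProduct_sumElim, dotProduct_zero, add_zero] at hb
  refine ⟨μ, fun k => hμpq (.inl k), hb, fun j => ?_⟩
  have hpq : μ ᵥ* H - a = q - p := by rw [← hM.1]; abel
  have hp : 0 ≤ p j := hμpq (.inr (.inl j))
  have hq : 0 ≤ q j := hμpq (.inr (.inr j))
  have hpqt : -p j - q j = -t := congrFun hM.2 j
  rw [hpq, abs_le, Pi.sub_apply]
  constructor <;> linarith

variable {H : Matrix κ ν 𝕜} {h : κ → 𝕜}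

theorem IsL1DualCertificate.add {a a' : ν → 𝕜} {t t' b b' : 𝕜} {μ μ' : κ → 𝕜}
    (hμ : IsL1DualCertificate H h a t b μ) (hμ' : IsL1DualCertificate H h a' t' b' μ') :
    IsL1DualCertificate H h (a + a') (t + t') (b + b') (μ + μ') := by
  refine ⟨add_nonneg hμ.1 hμ'.1, by rw [add_dotProduct]; exact add_le_add hμ.2.1 hμ'.2.1,
    fun j => ?_⟩
  calc |((μ + μ') ᵥ* H - (a + a')) j| = |(μ ᵥ* H - a) j + (μ' ᵥ* H - a') j| := by
        rw [add_vecMul]; congr 1; simp only [Pi.add_apply, Pi.sub_apply]; ring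
    _ ≤ t + t' := (abs_add_le _ _).trans (add_le_add (hμ.2.2 j) (hμ'.2.2 j))

theorem abs_vecMul_apply_le_dotProduct {ρ : Type*} [Fintype ρ] {R : Matrix ρ ν 𝕜} {v s : ρ → 𝕜}
    (hv : 0 ≤ v) (j : ν) (hR : ∀ i, |R i j| ≤ s i) : |(v ᵥ* R) j| ≤ v ⬝ᵥ s :=
  calc |∑ i, v i * R i j| ≤ ∑ i, |v i * R i j| := Finset.abs_sum_le_sum_abs _ _
    _ ≤ ∑ i, v i * s i := by
      gcongr with i
      rw [abs_mul, abs_of_nonneg (hv i)]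
      exact mul_le_mul_of_nonneg_left (hR i) (hv i)

theorem IsL1DualCertificate.vecMul {ρ : Type*} [Fintype ρ] {A : Matrix ρ ν 𝕜} {s r : ρ → 𝕜}
    {Λ : Matrix ρ κ 𝕜} (hΛ : ∀ i, IsL1DualCertificate H h (A i) (s i) (r i) (Λ i))
    {v : ρ → 𝕜} (hv : 0 ≤ v) : IsL1DualCertificate H h (v ᵥ* A) (v ⬝ᵥ s) (v ⬝ᵥ r) (v ᵥ* Λ) := by
  refine ⟨fun l => dotProduct_nonneg_of_nonneg hv fun i => (hΛ i).1 l, ?_, fun j => ?_⟩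
  · rw [← dotProduct_mulVec]
    exact dotProduct_le_dotProduct_of_nonneg_left (fun i => (hΛ i).2.1) hv
  · rw [vecMul_vecMul, ← vecMul_sub]
    exact abs_vecMul_apply_le_dotProduct hv j fun i => (hΛ i).2.2 j

end L1

theorem affine_dual_dominates_primal_nonaffine_general {nx ny nz nf nh : ℕ}
    (c : Fin nx → ℝ) (d : Fin ny → ℝ) (B : Matrix (Fin nf) (Fin ny) ℝ)
    (f : (Fin nx → ℝ) →ᵃ[ℝ] (Fin nf → ℝ))
    (F : (Fin nx → ℝ) →ᵃ[ℝ] Matrix (Fin nf) (Fin nz) ℝ)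
    -- polyhedral support:
    (H : Matrix (Fin nh) (Fin nz) ℝ) (h : Fin nh → ℝ)
    (hZne : ∃ z : Fin nz → ℝ, H.mulVec z ≤ h)
    (X : Set (Fin nx → ℝ))
    (YbarP YbarD : Set ((Fin nx → ℝ) × ℝ × ℝ))
    -- the primal non-affine recourse approximation:
    (hYbarP : YbarP = {q : (Fin nx → ℝ) × ℝ × ℝ | q.1 ∈ X ∧ 0 ≤ q.2.2 ∧
      ∃ (qv : Fin ny → ℝ) (Q : Matrix (Fin ny) (Fin nz) ℝ) (qd : Fin ny → ℝ),
        (∀ z : Fin nz → ℝ, H.mulVec z ≤ h →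
          c ⬝ᵥ q.1 + d ⬝ᵥ (qv + Q.mulVec z + (∑ i, |z i|) • qd)
            - q.2.2 * ∑ i, |z i| ≤ q.2.1) ∧
        (∀ z : Fin nz → ℝ, H.mulVec z ≤ h →
          f q.1 + (F q.1).mulVec z ≤ B.mulVec (qv + Q.mulVec z + (∑ i, |z i|) • qd)) ∧
        0 ≤ q.2.2 - d ⬝ᵥ qd ∧ 0 ≤ B.mulVec qd})
    -- the affine dual recourse approximation, with dual uncertainty set
    -- `P = {ρ ≥ 0 : Bᵀρ = d}`:
    (hYbarD : YbarD = {q : (Fin nx → ℝ) × ℝ × ℝ | q.1 ∈ X ∧ 0 ≤ q.2.2 ∧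
      ∃ (π : Fin nh → ℝ) (Pm : Matrix (Fin nh) (Fin nf) ℝ),
        ∀ ρ : Fin nf → ℝ, 0 ≤ ρ → Bᵀ.mulVec ρ = d →
          (c ⬝ᵥ q.1 + ρ ⬝ᵥ f q.1 + (π + Pm.mulVec ρ) ⬝ᵥ h ≤ q.2.1 ∧
           (∀ j : Fin nz,
             -q.2.2 ≤ (Hᵀ.mulVec (π + Pm.mulVec ρ) - (F q.1)ᵀ.mulVec ρ) j ∧
             (Hᵀ.mulVec (π + Pm.mulVec ρ) - (F q.1)ᵀ.mulVec ρ) j ≤ q.2.2) ∧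
           0 ≤ π + Pm.mulVec ρ)}) :
    YbarP ⊆ YbarD := by
  subst hYbarP hYbarD
  rintro ⟨x, υ, k⟩ ⟨hX, hk, qv, Q, qd, hobj, hrec, hkd, hBqd⟩
  dsimp only at hobj hrec hkd ⊢
  obtain ⟨π, hπ⟩ := exists_isL1DualCertificate H h hZne (a := d ᵥ* Q)
      (b := υ - c ⬝ᵥ x - d ⬝ᵥ qv) hkd fun z hz => by
    have := hobj z hz
    rw [dotProduct_add, dotProduct_add, dotProduct_mulVec, dotProduct_smul, smul_eq_mul] at this
    linarith
  choose Λ hΛ using fun i => exists_isL1DualCertificate H h hZne (a := (F x - B * Q) i)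
      (b := (B *ᵥ qv - f x) i) (hBqd i) fun z hz => by
    have hrow := hrec z hz i
    simp only [mulVec_add, mulVec_smul, mulVec_mulVec, Pi.add_apply, Pi.smul_apply,
      smul_eq_mul] at hrow
    have hFz : (F x - B * Q) i ⬝ᵥ z = (F x *ᵥ z) i - ((B * Q) *ᵥ z) i := sub_dotProduct _ _ _
    rw [hFz, Pi.sub_apply]
    linarith
  refine ⟨hX, hk, π, Λᵀ, fun ρ hρ hρB => ?_⟩
  rw [mulVec_transpose] at hρB
  simp only [mulVec_transpose, mulVec_transpose Λ ρ]
  have hcert : IsL1DualCertificate H h (ρ ᵥ* F x) k (υ - c ⬝ᵥ x - ρ ⬝ᵥ f x) (π + ρ ᵥ* Λ) := by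
    convert hπ.add (IsL1DualCertificate.vecMul hΛ hρ) using 1
    · rw [vecMul_sub, ← vecMul_vecMul, hρB]; abel
    · rw [dotProduct_mulVec, hρB]; ring
    · rw [dotProduct_sub, dotProduct_mulVec, hρB]; ring
  obtain ⟨hnonneg, hobj', hbound⟩ := hcert
  exact ⟨by linarith, fun j => abs_le.mp (hbound j), hnonneg⟩

/-- **Theorem 5 (the affine dual adaptation dominates the primal non-affine
adaptation).**
For the two-stage linear evaluation function `g(x,z) = cᵀx + min{dᵀy : By ≥ f(x)+F(x)z}`
with ℓ₁ penalty and polyhedral support, under complete and bounded recourse, the primal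
non-affine approximation `Ȳ_P` is contained in the affine dual approximation `Ȳ_D`. -/
theorem affine_dual_dominates_primal_nonaffine {nx ny nz nf nh : ℕ}
    (c : Fin nx → ℝ) (d : Fin ny → ℝ) (B : Matrix (Fin nf) (Fin ny) ℝ)
    (f : (Fin nx → ℝ) →ᵃ[ℝ] (Fin nf → ℝ))
    (F : (Fin nx → ℝ) →ᵃ[ℝ] Matrix (Fin nf) (Fin nz) ℝ)
    -- polyhedral support:
    (H : Matrix (Fin nh) (Fin nz) ℝ) (h : Fin nh → ℝ) (hh : 0 ≤ h)
    (hZne : ∃ z : Fin nz → ℝ, H.mulVec z ≤ h)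
    -- complete and bounded recourse:
    (hcomplete : ∀ v : Fin nf → ℝ, ∃ y : Fin ny → ℝ, v ≤ B.mulVec y)
    (hbounded : ¬ ∃ y : Fin ny → ℝ, 0 ≤ B.mulVec y ∧ d ⬝ᵥ y < 0)
    (X : Set (Fin nx → ℝ))
    (YbarP YbarD : Set ((Fin nx → ℝ) × ℝ × ℝ))
    -- the primal non-affine recourse approximation:
    (hYbarP : YbarP = {q : (Fin nx → ℝ) × ℝ × ℝ | q.1 ∈ X ∧ 0 ≤ q.2.2 ∧
      ∃ (qv : Fin ny → ℝ) (Q : Matrix (Fin ny) (Fin nz) ℝ) (qd : Fin ny → ℝ),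
        (∀ z : Fin nz → ℝ, H.mulVec z ≤ h →
          c ⬝ᵥ q.1 + d ⬝ᵥ (qv + Q.mulVec z + (∑ i, |z i|) • qd)
            - q.2.2 * ∑ i, |z i| ≤ q.2.1) ∧
        (∀ z : Fin nz → ℝ, H.mulVec z ≤ h →
          f q.1 + (F q.1).mulVec z ≤ B.mulVec (qv + Q.mulVec z + (∑ i, |z i|) • qd)) ∧
        0 ≤ q.2.2 - d ⬝ᵥ qd ∧ 0 ≤ B.mulVec qd})
    -- the affine dual recourse approximation, with dual uncertainty set
    -- `P = {ρ ≥ 0 : Bᵀρ = d}`: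
    (hYbarD : YbarD = {q : (Fin nx → ℝ) × ℝ × ℝ | q.1 ∈ X ∧ 0 ≤ q.2.2 ∧
      ∃ (π : Fin nh → ℝ) (Pm : Matrix (Fin nh) (Fin nf) ℝ),
        ∀ ρ : Fin nf → ℝ, 0 ≤ ρ → Bᵀ.mulVec ρ = d →
          (c ⬝ᵥ q.1 + ρ ⬝ᵥ f q.1 + (π + Pm.mulVec ρ) ⬝ᵥ h ≤ q.2.1 ∧
           (∀ j : Fin nz,
             -q.2.2 ≤ (Hᵀ.mulVec (π + Pm.mulVec ρ) - (F q.1)ᵀ.mulVec ρ) j ∧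
             (Hᵀ.mulVec (π + Pm.mulVec ρ) - (F q.1)ᵀ.mulVec ρ) j ≤ q.2.2) ∧
           0 ≤ π + Pm.mulVec ρ)}) :
    YbarP ⊆ YbarD :=
  affine_dual_dominates_primal_nonaffine_general c d B f F H h hZne X YbarP YbarD hYbarP hYbarD
end
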